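/- arXiv:2007.01113 — 11 statements merged into one kernel-verified Lean document; each statement's English description precedes it below -/
import Mathlib

section
/- Let q be a prime power and n = q^2 - 1. For x in {0,...,n-1} with q-adic expansion x = a_0 + a_1·q, where x is the minimal element of its cyclotomic coset with respect to q, one has n - q·x mod n < x if and only if a_0 + a_1 > q - 1. -/
/-- SR-asymmetry criterion for cyclotomic cosets modulo `q^2 - 1`:
for `x` minimal in its coset, `(n - q·x) mod n < x` iff `a0 + a1 > q - 1`. -/
theorem stmt1 (q : ℕ) (hq : IsPrimePow q) (n : ℕ) (hn : n = q ^ 2 - 1)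
    (x a0 a1 : ℕ) (hx : x < n) (ha0 : a0 ≤ q - 1) (ha1 : a1 ≤ q - 1)
    (hxd : x = a0 + a1 * q)
    (hmin : ∀ t : ℕ, x ≤ x * q ^ t % n) :
    ((((n : ℤ) - q * x) % n).toNat < x) ↔ a0 + a1 > q - 1 := by
  have hq2 : 2 ≤ q := hq.two_le
  obtain ⟨k, rfl⟩ : ∃ k, q = k + 2 := ⟨q - 2, by omega⟩
  have hsq : (k + 2) ^ 2 = k * k + 4 * k + 4 := by ring
  have hn' : n = k * k + 4 * k + 3 := by omega
  have hb0 : a0 ≤ k + 1 := by omega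
  have hb1 : a1 ≤ k + 1 := by omega
  have hkey : a0 < k + 1 ∨ a1 < k + 1 := by
    by_contra h
    push_neg at h
    have h0 : a0 = k + 1 := by omega
    have h1 : a1 = k + 1 := by omega
    rw [hxd, h0, h1] at hx
    nlinarith
  have hm : a1 + a0 * (k + 2) < n := by
    rcases hkey with h | h
    · have h' : a0 ≤ k := by omega
      have := Nat.mul_le_mul_right (k + 2) h'
      nlinarith
    · have h' : a1 ≤ k := by omega
      have := Nat.mul_le_mul_right (k + 2) hb0
      nlinarith
  set m : ℕ := a1 + a0 * (k + 2) with hmdef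
  have hnZ : (n : ℤ) = ((k : ℤ) + 2) ^ 2 - 1 := by
    have h := congrArg (Nat.cast (R := ℤ)) hn'
    push_cast at h; linarith
  have hcast : ((k : ℤ) + 2) * x = (m : ℤ) + (n : ℤ) * a1 := by
    rw [hxd, hnZ]; push_cast [hmdef]; ring
  have hmod : ((n : ℤ) - ((k : ℤ) + 2) * x) % n = ((n : ℤ) - m) % n := by
    rw [show ((n : ℤ) - ((k : ℤ) + 2) * x) = ((n : ℤ) - m) + (n : ℤ) * (-(a1 : ℤ)) by
      linarith]
    exact Int.add_mul_emod_self_left _ _ _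
  push_cast
  rw [hmod]
  rcases Nat.eq_zero_or_pos m with hm0 | hmpos
  · have h2 : a1 = 0 ∧ a0 * (k + 2) = 0 := by omega
    have ha00 : a0 = 0 := by
      rcases Nat.mul_eq_zero.mp h2.2 with h | h
      · exact h
      · omega
    have ha10 : a1 = 0 := h2.1
    rw [hm0]
    simp [hxd, ha00, ha10]
  · have heq : ((n : ℤ) - m) % n = (n : ℤ) - m := by
      apply Int.emod_eq_of_lt
      · have : (m : ℤ) ≤ (n : ℤ) := by exact_mod_cast hm.le
        linarith
      · have : (0 : ℤ) < (m : ℤ) := by exact_mod_cast hmpos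
        linarith
    rw [heq]
    have htn : ((n : ℤ) - m).toNat = n - m := by
      have : (m : ℤ) ≤ (n : ℤ) := by exact_mod_cast hm.le
      omega
    rw [htn]
    have hlin : x + m = (a0 + a1) * (k + 3) := by rw [hxd, hmdef]; ring
    have e1 : (k + 2) * (k + 3) = k * k + 5 * k + 6 := by ring
    have e2 : (k + 1) * (k + 3) = k * k + 4 * k + 3 := by ring
    rw [Nat.sub_lt_iff_lt_add hm.le]
    constructor
    · intro h
      by_contra hc
      push_neg at hc
      have hc' : a0 + a1 ≤ k + 1 := by omega
      have := Nat.mul_le_mul_right (k + 3) hc'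
      omega
    · intro h
      have hs : k + 2 ≤ a0 + a1 := by omega
      have := Nat.mul_le_mul_right (k + 3) hs
      omega
end

section
/- Let q ≥ 2 and n = q^2 - 1. An element x ∈ {1,...,n-1} satisfies n - x·q ≡ x (mod n) (i.e., the coset I_x = {x, xq} is symmetric) together with x·q ≢ x (mod n) (cardinality two) if and only if (q-1) divides x and (q+1) does not divide x. -/
/-- Symmetric cyclotomic cosets of cardinality two modulo `q^2 - 1` are exactly
the multiples of `q - 1` that are not multiples of `q + 1`. -/
theorem stmt4 (q n : ℕ) (hq : 2 ≤ q) (hn : n = q ^ 2 - 1)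
    (x : ℕ) (hx1 : 1 ≤ x) (hx2 : x ≤ n - 1) :
    ((((n : ℤ) - x * q) ≡ x [ZMOD (n : ℤ)]) ∧ ¬ ((x : ℤ) * q ≡ x [ZMOD (n : ℤ)]))
    ↔ ((q - 1) ∣ x ∧ ¬ (q + 1) ∣ x) := by
  have hncast : (n : ℤ) = ((q:ℤ) - 1) * ((q:ℤ) + 1) := by
    have h1 : 1 ≤ q ^ 2 := Nat.one_le_pow _ _ (by omega)
    subst hn; push_cast [h1]; ring
  have hq1 : ((q:ℤ) + 1) ≠ 0 := by positivity
  have hq2 : ((q:ℤ) - 1) ≠ 0 := by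
    have : (2:ℤ) ≤ q := by exact_mod_cast hq
    omega
  have h1 : (((n : ℤ) - x * q) ≡ x [ZMOD (n : ℤ)]) ↔ ((q:ℤ) - 1) ∣ x := by
    rw [Int.modEq_iff_dvd]
    have e : (x:ℤ) - ((n : ℤ) - x * q) = x * ((q:ℤ) + 1) - (n:ℤ) := by ring
    rw [e, dvd_sub_left (dvd_refl _), hncast, mul_dvd_mul_iff_right hq1]
  have h2 : (((x:ℤ) * q) ≡ x [ZMOD (n : ℤ)]) ↔ ((q:ℤ) + 1) ∣ x := by
    rw [Int.modEq_iff_dvd]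
    have e : (x:ℤ) - x * q = -(x * ((q:ℤ) - 1)) := by ring
    rw [e, dvd_neg, hncast, mul_comm ((q:ℤ) - 1), mul_dvd_mul_iff_right hq2]
  rw [h1, h2]
  have c1 : ((q:ℤ) - 1) ∣ (x:ℤ) ↔ (q - 1) ∣ x := by
    rw [show ((q:ℤ) - 1) = ((q - 1 : ℕ) : ℤ) by push_cast [Nat.cast_sub (by omega : 1 ≤ q)]; ring]
    exact Int.natCast_dvd_natCast
  have c2 : ((q:ℤ) + 1) ∣ (x:ℤ) ↔ (q + 1) ∣ x := by
    rw [show ((q:ℤ) + 1) = ((q + 1 : ℕ) : ℤ) by push_cast; ring]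
    exact Int.natCast_dvd_natCast
  rw [c1, c2]
end

section
/- Let q ≥ 2 and n = q^4 - 1. There is no x ∈ {0,...,n-1} whose cyclotomic coset I_x = {x, x·q^2 mod n} with respect to q^2 has cardinality 2 and is symmetric for the Hermitian duality; that is, if x·q^2 ≢ x (mod n), then neither n - q·x ≡ x (mod n) nor n - q·x ≡ q^2·x (mod n) can hold. -/
/-- There are no symmetric cyclotomic cosets of cardinality 2 with respect to
`q^2` modulo `q^4 - 1` for the Hermitian duality. -/
theorem stmt7 (q n : ℕ) (hq : 2 ≤ q) (hn : n = q ^ 4 - 1)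
    (x : ℕ) (hx : x < n) (hcard2 : ¬ (x * q ^ 2) % n = x) :
    ¬ (((n : ℤ) - q * x) ≡ x [ZMOD (n : ℤ)]) ∧
    ¬ (((n : ℤ) - q * x) ≡ (q : ℤ) ^ 2 * x [ZMOD (n : ℤ)]) := by
  have hq4 : (1 : ℕ) ≤ q ^ 4 := Nat.one_le_pow _ _ (by omega)
  have hnz : (n : ℤ) = (q : ℤ) ^ 4 - 1 := by
    rw [hn]; push_cast [hq4]; ring
  have key : ¬ ((n : ℤ) ∣ (x : ℤ) * ((q : ℤ) + 1)) := by
    intro hd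
    apply hcard2
    have hd2 : (n : ℤ) ∣ ((x * q ^ 2 : ℕ) : ℤ) - (x : ℤ) := by
      have h : ((x * q ^ 2 : ℕ) : ℤ) - (x : ℤ) = ((x : ℤ) * ((q : ℤ) + 1)) * ((q : ℤ) - 1) := by
        push_cast; ring
      rw [h]; exact hd.mul_right _
    have hmod : x ≡ x * q ^ 2 [MOD n] := (Nat.modEq_iff_dvd).mpr hd2
    have := hmod.symm
    unfold Nat.ModEq at this
    rwa [Nat.mod_eq_of_lt hx] at this
  constructor
  · intro h
    apply key
    have hd := h.dvd
    have h2 : (x : ℤ) * ((q : ℤ) + 1) = ((x : ℤ) - ((n : ℤ) - q * x)) + n := by ring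
    rw [h2]
    exact dvd_add hd dvd_rfl
  · intro h
    have hd := h.dvd
    have hd3 : (n : ℤ) ∣ (q : ℤ) * ((x : ℤ) * ((q : ℤ) + 1)) := by
      have h2 : (q : ℤ) * ((x : ℤ) * ((q : ℤ) + 1)) =
          ((q : ℤ) ^ 2 * x - ((n : ℤ) - q * x)) + n := by ring
      rw [h2]
      exact dvd_add hd dvd_rfl
    have hcop : IsCoprime ((n : ℤ)) ((q : ℤ)) := ⟨-1, (q : ℤ) ^ 3, by rw [hnz]; ring⟩
    exact key (hcop.dvd_of_dvd_mul_left hd3)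
end

section
/- Let q ≥ 2 and n = q^4 - 1. Let x = a_0 + a_1·q + a_2·q^2 + a_3·q^3 (0 ≤ a_i ≤ q-1) be the minimal element of its cyclotomic coset I_x = {x, y} with respect to q^2, where y = x·q^2 mod n and x ≠ y. Then q·x mod n > q·y mod n if and only if (a_2 > a_0) or (a_2 = a_0 and a_1 > a_3). -/
private lemma digitlt (q b0 b1 b2 b3 : ℕ) (hq : 2 ≤ q)
    (h0 : b0 ≤ q - 1) (h1 : b1 ≤ q - 1) (h2 : b2 ≤ q - 1) (h3 : b3 ≤ q - 1)
    (hnm : ¬(b0 = q-1 ∧ b1 = q-1 ∧ b2 = q-1 ∧ b3 = q-1)) :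
    b0 + b1 * q + b2 * q ^ 2 + b3 * q ^ 3 < q ^ 4 - 1 := by
  have h0' : b0 + 1 ≤ q := by omega
  have h1' : b1 + 1 ≤ q := by omega
  have h2' : b2 + 1 ≤ q := by omega
  have h3' : b3 + 1 ≤ q := by omega
  apply Nat.lt_sub_of_add_lt
  push_neg at hnm
  by_cases e0 : b0 = q - 1
  · by_cases e1 : b1 = q - 1
    · by_cases e2 : b2 = q - 1
      · have e3 : b3 ≠ q - 1 := hnm e0 e1 e2
        have : b3 + 2 ≤ q := by omega
        nlinarith [pow_pos (show 0 < q by omega) 3, pow_pos (show 0 < q by omega) 2]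
      · have : b2 + 2 ≤ q := by omega
        nlinarith [pow_pos (show 0 < q by omega) 3, pow_pos (show 0 < q by omega) 2]
    · have : b1 + 2 ≤ q := by omega
      nlinarith [pow_pos (show 0 < q by omega) 3, pow_pos (show 0 < q by omega) 2]
  · have : b0 + 2 ≤ q := by omega
    nlinarith [pow_pos (show 0 < q by omega) 3, pow_pos (show 0 < q by omega) 2]

private lemma cmplex (q a0 a1 a2 a3 : ℕ) (hq : 2 ≤ q)
    (h0 : a0 < q) (h1 : a1 < q) (h2 : a2 < q) (h3 : a3 < q)
    (hlex : a2 > a0 ∨ (a2 = a0 ∧ a1 > a3)) :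
    a1 + a2 * q + a3 * q ^ 2 + a0 * q ^ 3 < a3 + a0 * q + a1 * q ^ 2 + a2 * q ^ 3 := by
  zify at *
  have hq0 : (0:ℤ) ≤ (q:ℤ) := by linarith
  have hq1 : (0:ℤ) ≤ (q:ℤ) - 1 := by linarith
  have hq2 : (0:ℤ) ≤ (q:ℤ) + 1 := by linarith
  rcases hlex with h | ⟨he, h⟩
  · have ha : (1:ℤ) ≤ (a2:ℤ) - a0 := by linarith
    have hb : (a1:ℤ) - a3 ≥ -((q:ℤ) - 1) := by linarith
    have hc : (0:ℤ) ≤ (q:ℤ)^3 - q := by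
      nlinarith [mul_nonneg (mul_nonneg hq0 hq1) hq2]
    have hd : (0:ℤ) ≤ (q:ℤ)^2 - 1 := by nlinarith [mul_nonneg hq1 hq2]
    nlinarith [mul_le_mul_of_nonneg_right ha hc, mul_le_mul_of_nonneg_right hb.le hd,
      sq_nonneg ((q:ℤ) - 1)]
  · rw [he]
    have h1' : (1:ℤ) ≤ (a1:ℤ) - a3 := by linarith
    have hd : (0:ℤ) ≤ (q:ℤ)^2 - 1 := by nlinarith [mul_nonneg hq1 hq2]
    nlinarith [mul_le_mul_of_nonneg_right h1' hd]

/-- Comparison of `q·x mod n` and `q·y mod n` for a cardinality-2 coset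
`I_x = {x, y}` with respect to `q^2` modulo `n = q^4 - 1`, in terms of the
`q`-adic digits of the minimal element `x`. -/
theorem stmt8 (q n : ℕ) (hq : 2 ≤ q) (hn : n = q ^ 4 - 1)
    (x a0 a1 a2 a3 y : ℕ) (hx : x < n)
    (h0 : a0 ≤ q - 1) (h1 : a1 ≤ q - 1) (h2 : a2 ≤ q - 1) (h3 : a3 ≤ q - 1)
    (hxd : x = a0 + a1 * q + a2 * q ^ 2 + a3 * q ^ 3)
    (hy : y = (x * q ^ 2) % n) (hne : x ≠ y) (hmin : x ≤ y) :
    ((x * q) % n > (y * q) % n) ↔ (a2 > a0 ∨ (a2 = a0 ∧ a1 > a3)) := by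
  have hq4 : q ^ 4 = n + 1 := by
    rw [hn, Nat.sub_add_cancel (Nat.one_le_pow _ _ (by omega))]
  -- x < n means not all digits are maximal
  have hnm : ¬(a0 = q-1 ∧ a1 = q-1 ∧ a2 = q-1 ∧ a3 = q-1) := by
    rintro ⟨e0, e1, e2, e3⟩
    obtain ⟨p, rfl⟩ : ∃ p, q = p + 1 := ⟨q - 1, by omega⟩
    simp only [Nat.add_sub_cancel] at e0 e1 e2 e3
    have hxn : x + 1 = (p + 1) ^ 4 := by rw [hxd, e0, e1, e2, e3]; ring
    omega
  -- compute s = x*q % n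
  set s := a3 + a0 * q + a1 * q ^ 2 + a2 * q ^ 3 with hs
  have hslt : s < n := by
    rw [hn]; exact digitlt q a3 a0 a1 a2 hq h3 h0 h1 h2 (by tauto)
  have hsm : x * q % n = s := by
    have hsx : x * q = s + a3 * n :=
      calc x * q = a0 * q + a1 * q ^ 2 + a2 * q ^ 3 + a3 * q ^ 4 := by rw [hxd]; ring
        _ = a0 * q + a1 * q ^ 2 + a2 * q ^ 3 + a3 * (n + 1) := by rw [hq4]
        _ = s + a3 * n := by rw [hs]; ring
    rw [hsx, Nat.add_mul_mod_self_right, Nat.mod_eq_of_lt hslt]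
  -- compute y
  set t := a2 + a3 * q + a0 * q ^ 2 + a1 * q ^ 3 with ht
  have htlt : t < n := by
    rw [hn]; exact digitlt q a2 a3 a0 a1 hq h2 h3 h0 h1 (by tauto)
  have hty : y = t := by
    have hxq2 : x * q ^ 2 = t + (a2 + a3 * q) * n :=
      calc x * q ^ 2
          = a0 * q ^ 2 + a1 * q ^ 3 + a2 * q ^ 4 + a3 * q * q ^ 4 := by rw [hxd]; ring
        _ = a0 * q ^ 2 + a1 * q ^ 3 + a2 * (n + 1) + a3 * q * (n + 1) := by rw [hq4]
        _ = t + (a2 + a3 * q) * n := by rw [ht]; ring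
    rw [hy, hxq2, Nat.add_mul_mod_self_right, Nat.mod_eq_of_lt htlt]
  -- compute u = y*q % n
  set u := a1 + a2 * q + a3 * q ^ 2 + a0 * q ^ 3 with hu
  have hult : u < n := by
    rw [hn]; exact digitlt q a1 a2 a3 a0 hq h1 h2 h3 h0 (by tauto)
  have hum : y * q % n = u := by
    have hyq : y * q = u + a1 * n :=
      calc y * q = a2 * q + a3 * q ^ 2 + a0 * q ^ 3 + a1 * q ^ 4 := by rw [hty, ht]; ring
        _ = a2 * q + a3 * q ^ 2 + a0 * q ^ 3 + a1 * (n + 1) := by rw [hq4]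
        _ = u + a1 * n := by rw [hu]; ring
    rw [hyq, Nat.add_mul_mod_self_right, Nat.mod_eq_of_lt hult]
  rw [hsm, hum]
  have h0' : a0 < q := by omega
  have h1' : a1 < q := by omega
  have h2' : a2 < q := by omega
  have h3' : a3 < q := by omega
  constructor
  · intro hgt
    by_contra hc
    push_neg at hc
    obtain ⟨hc1, hc2⟩ := hc
    rcases Nat.lt_or_ge a2 a0 with hlt | hge
    · have := cmplex q a2 a3 a0 a1 hq h2' h3' h0' h1' (Or.inl hlt)
      omega
    · have heq : a2 = a0 := by omega
      rcases Nat.lt_or_ge a1 a3 with hlt1 | hge1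
      · have := cmplex q a2 a3 a0 a1 hq h2' h3' h0' h1' (Or.inr ⟨heq.symm, hlt1⟩)
        omega
      · have : a1 = a3 := by have := hc2 heq; omega
        subst heq this
        omega
  · exact fun h => cmplex q a0 a1 a2 a3 hq h0' h1' h2' h3' h
end

section
/- Let q ≥ 2 and n = q^4 - 1. Let x = a_0 + a_1·q + a_2·q^2 + a_3·q^3 be the minimal element of its cardinality-2 cyclotomic coset I_x = {x, y} with respect to q^2 (y = x·q^2 mod n), and suppose q·x mod n > q·y mod n. Then (n - q·x) mod n ≤ x holds if and only if either a_2 + a_3 > q - 1, or a_2 + a_3 = q - 1 and a_1 + a_2 > q - 1. -/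
/-- Basic digit identity: digits plus complementary digits fill up `n = q^4 - 1`. -/
lemma stmt9_kid (q n c0 c1 c2 c3 b0 b1 b2 b3 : ℕ) (hn : n + 1 = q ^ 4)
    (e0 : c0 + b0 + 1 = q) (e1 : c1 + b1 + 1 = q)
    (e2 : c2 + b2 + 1 = q) (e3 : c3 + b3 + 1 = q) :
    (c0 + c1 * q + c2 * q ^ 2 + c3 * q ^ 3)
      + (b0 + b1 * q + b2 * q ^ 2 + b3 * q ^ 3) + 1 = n + 1 := by
  rw [hn]
  zify at e0 e1 e2 e3 ⊢
  linear_combination e0 + (q : ℤ) * e1 + (q : ℤ) ^ 2 * e2 + (q : ℤ) ^ 3 * e3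

/-- If the complementary digits are not all zero, a digit expansion is `< n`. -/
lemma stmt9_dlt (q n c0 c1 c2 c3 b0 b1 b2 b3 : ℕ) (hq : 1 ≤ q) (hn : n + 1 = q ^ 4)
    (e0 : c0 + b0 + 1 = q) (e1 : c1 + b1 + 1 = q)
    (e2 : c2 + b2 + 1 = q) (e3 : c3 + b3 + 1 = q)
    (hb : 1 ≤ b0 + b1 + b2 + b3) :
    c0 + c1 * q + c2 * q ^ 2 + c3 * q ^ 3 < n := by
  have hk := stmt9_kid q n c0 c1 c2 c3 b0 b1 b2 b3 hn e0 e1 e2 e3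
  have m1 : b1 ≤ b1 * q := le_mul_of_one_le_right (Nat.zero_le _) hq
  have m2 : b2 ≤ b2 * q ^ 2 := le_mul_of_one_le_right (Nat.zero_le _) (Nat.one_le_pow _ _ hq)
  have m3 : b3 ≤ b3 * q ^ 3 := le_mul_of_one_le_right (Nat.zero_le _) (Nat.one_le_pow _ _ hq)
  linarith

/-- Computing a remainder from an explicit decomposition. -/
lemma stmt9_nmod (n v r k : ℕ) (h : v = r + k * n) (hr : r < n) : v % n = r := by
  subst h
  rw [Nat.add_mul_mod_self_right, Nat.mod_eq_of_lt hr]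

set_option maxHeartbeats 1600000 in
/-- SR-asymmetry criterion for cardinality-2 cosets with respect to `q^2`
modulo `n = q^4 - 1` in the case `q·x mod n > q·y mod n`. -/
theorem stmt9 (q n : ℕ) (hq : 2 ≤ q) (hn : n = q ^ 4 - 1)
    (x a0 a1 a2 a3 y : ℕ) (hx : x < n)
    (h0 : a0 ≤ q - 1) (h1 : a1 ≤ q - 1) (h2 : a2 ≤ q - 1) (h3 : a3 ≤ q - 1)
    (hxd : x = a0 + a1 * q + a2 * q ^ 2 + a3 * q ^ 3)
    (hy : y = (x * q ^ 2) % n) (hne : x ≠ y) (hmin : x ≤ y)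
    (hqxy : (x * q) % n > (y * q) % n) :
    ((((n : ℤ) - q * x) % n).toNat ≤ x) ↔
      (a2 + a3 > q - 1 ∨ (a2 + a3 = q - 1 ∧ a1 + a2 > q - 1)) := by
  subst hy
  have hq4 : n + 1 = q ^ 4 := by
    subst hn
    have : 1 ≤ q ^ 4 := Nat.one_le_pow _ _ (by omega)
    omega
  have ha0 : a0 ≤ q - 1 := h0
  -- complementary digits
  obtain ⟨b0, hb0⟩ : ∃ b, a0 + b + 1 = q := ⟨q - 1 - a0, by omega⟩
  obtain ⟨b1, hb1⟩ : ∃ b, a1 + b + 1 = q := ⟨q - 1 - a1, by omega⟩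
  obtain ⟨b2, hb2⟩ : ∃ b, a2 + b + 1 = q := ⟨q - 1 - a2, by omega⟩
  obtain ⟨b3, hb3⟩ : ∃ b, a3 + b + 1 = q := ⟨q - 1 - a3, by omega⟩
  have hx' : a0 + a1 * q + a2 * q ^ 2 + a3 * q ^ 3 < n := hxd ▸ hx
  have hbsum : 1 ≤ b0 + b1 + b2 + b3 := by
    by_contra hcon
    have hz0 : b0 = 0 := by omega
    have hz1 : b1 = 0 := by omega
    have hz2 : b2 = 0 := by omega
    have hz3 : b3 = 0 := by omega
    subst hz0 hz1 hz2 hz3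
    have hk := stmt9_kid q n a0 a1 a2 a3 0 0 0 0 hq4 hb0 hb1 hb2 hb3
    linarith only [hk, hx']
  -- the three cyclic shifts
  have hr1lt : a3 + a0 * q + a1 * q ^ 2 + a2 * q ^ 3 < n :=
    stmt9_dlt q n a3 a0 a1 a2 b3 b0 b1 b2 (by omega) hq4 hb3 hb0 hb1 hb2 (by omega)
  have hr2lt : a2 + a3 * q + a0 * q ^ 2 + a1 * q ^ 3 < n :=
    stmt9_dlt q n a2 a3 a0 a1 b2 b3 b0 b1 (by omega) hq4 hb2 hb3 hb0 hb1 (by omega)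
  have hr3lt : a1 + a2 * q + a3 * q ^ 2 + a0 * q ^ 3 < n :=
    stmt9_dlt q n a1 a2 a3 a0 b1 b2 b3 b0 (by omega) hq4 hb1 hb2 hb3 hb0 (by omega)
  -- mod computations
  have hF1 : x * q = (a3 + a0 * q + a1 * q ^ 2 + a2 * q ^ 3) + a3 * n := by
    have h1 : x * q + a3 = (a3 + a0 * q + a1 * q ^ 2 + a2 * q ^ 3) + a3 * (n + 1) := by
      rw [hxd, hq4]; ring
    exact Nat.add_right_cancel (h1.trans (by ring))
  have hF2 : x * q ^ 2 = (a2 + a3 * q + a0 * q ^ 2 + a1 * q ^ 3) + (a2 + a3 * q) * n := by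
    have h1 : x * q ^ 2 + (a2 + a3 * q)
        = (a2 + a3 * q + a0 * q ^ 2 + a1 * q ^ 3) + (a2 + a3 * q) * (n + 1) := by
      rw [hxd, hq4]; ring
    exact Nat.add_right_cancel (h1.trans (by ring))
  have hF3 : (a2 + a3 * q + a0 * q ^ 2 + a1 * q ^ 3) * q
      = (a1 + a2 * q + a3 * q ^ 2 + a0 * q ^ 3) + a1 * n := by
    have h1 : (a2 + a3 * q + a0 * q ^ 2 + a1 * q ^ 3) * q + a1
        = (a1 + a2 * q + a3 * q ^ 2 + a0 * q ^ 3) + a1 * (n + 1) := by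
      rw [hq4]; ring
    exact Nat.add_right_cancel (h1.trans (by ring))
  have hyval : x * q ^ 2 % n = a2 + a3 * q + a0 * q ^ 2 + a1 * q ^ 3 :=
    stmt9_nmod n _ _ _ hF2 hr2lt
  have hr1val : x * q % n = a3 + a0 * q + a1 * q ^ 2 + a2 * q ^ 3 :=
    stmt9_nmod n _ _ _ hF1 hr1lt
  rw [hyval] at hne hmin hqxy
  have hr3val : (a2 + a3 * q + a0 * q ^ 2 + a1 * q ^ 3) * q % n
      = a1 + a2 * q + a3 * q ^ 2 + a0 * q ^ 3 :=
    stmt9_nmod n _ _ _ hF3 hr3lt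
  rw [hr1val, hr3val] at hqxy
  -- rewrite the integer modulus
  have hr1pos : 0 < a3 + a0 * q + a1 * q ^ 2 + a2 * q ^ 3 :=
    Nat.lt_of_le_of_lt (Nat.zero_le _) hqxy
  have hnpos : 0 < n := Nat.lt_of_le_of_lt (Nat.zero_le x) hx
  have hc : (x : ℤ) * q = ((a3 + a0 * q + a1 * q ^ 2 + a2 * q ^ 3 : ℕ) : ℤ) + (a3 : ℤ) * n := by
    exact_mod_cast congrArg (fun m : ℕ => (m : ℤ)) hF1
  have h1 : ((n : ℤ) - q * x)
      = ((n - (a3 + a0 * q + a1 * q ^ 2 + a2 * q ^ 3) : ℕ) : ℤ) + (n : ℤ) * (-(a3 : ℤ)) := by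
    rw [Nat.cast_sub hr1lt.le]
    push_cast at hc ⊢
    linear_combination -hc
  have hmod : ((n : ℤ) - q * x) % n
      = ((n - (a3 + a0 * q + a1 * q ^ 2 + a2 * q ^ 3) : ℕ) : ℤ) := by
    rw [h1, Int.add_mul_emod_self_left]
    refine Int.emod_eq_of_lt (Int.natCast_nonneg _) ?_
    exact_mod_cast Nat.sub_lt hnpos hr1pos
  rw [hmod, Int.toNat_natCast, Nat.sub_le_iff_le_add]
  -- now a purely combinatorial statement
  obtain ⟨s, hs⟩ : ∃ s, q = s + 2 := ⟨q - 2, by omega⟩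
  have hgroup : x + (a3 + a0 * q + a1 * q ^ 2 + a2 * q ^ 3)
      = (a0 + a3) + (a0 + a1) * q + (a1 + a2) * q ^ 2 + (a2 + a3) * q ^ 3 := by
    rw [hxd]; ring
  constructor
  · -- n ≤ x + r1 → digit condition
    intro hle
    by_contra hcon
    push_neg at hcon
    obtain ⟨hc1, hc2⟩ := hcon
    rcases Nat.lt_or_ge (a2 + a3) (q - 1) with hlt | hge
    · -- a2 + a3 ≤ q - 2 : contradiction
      subst hs
      have mA : (a0 + a1) * (s + 2) ≤ (2 * s + 2) * (s + 2) :=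
        Nat.mul_le_mul_right _ (by omega)
      have mB : (a1 + a2) * (s + 2) ^ 2 ≤ (2 * s + 2) * (s + 2) ^ 2 :=
        Nat.mul_le_mul_right _ (by omega)
      have mC : (a2 + a3) * (s + 2) ^ 3 ≤ s * (s + 2) ^ 3 :=
        Nat.mul_le_mul_right _ (by omega)
      have ha03 : a0 + a3 ≤ 2 * s + 2 := by omega
      linarith only [hgroup, hq4, hle, mA, mB, mC, ha03]
    · have heq : a2 + a3 = q - 1 := le_antisymm hc1 hge
      have hc2' : a1 + a2 ≤ q - 1 := hc2 heq
      rcases Nat.lt_or_ge (a1 + a2) (q - 1) with hlt2 | hge2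
      · -- a1 + a2 ≤ q - 2 : contradiction
        subst hs
        have mA : (a0 + a1) * (s + 2) ≤ (2 * s + 2) * (s + 2) :=
          Nat.mul_le_mul_right _ (by omega)
        have mB : (a1 + a2) * (s + 2) ^ 2 ≤ s * (s + 2) ^ 2 :=
          Nat.mul_le_mul_right _ (by omega)
        have mC : (a2 + a3) * (s + 2) ^ 3 ≤ (s + 1) * (s + 2) ^ 3 :=
          Nat.mul_le_mul_right _ (by omega)
        have ha03 : a0 + a3 ≤ 2 * s + 2 := by omega
        linarith only [hgroup, hq4, hle, mA, mB, mC, ha03]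
      · -- a1 + a2 = q - 1 and a2 + a3 = q - 1 : excluded by hmin / hqxy
        exfalso
        have ha13 : a1 = a3 := by omega
        subst ha13
        have hxy : x < a2 + a1 * q + a0 * q ^ 2 + a1 * q ^ 3 :=
          lt_of_le_of_ne hmin hne
        have hxdz : (x : ℤ) = a0 + a1 * q + a2 * q ^ 2 + a1 * q ^ 3 := by
          exact_mod_cast congrArg (fun m : ℕ => (m : ℤ)) hxd
        zify at hxy hqxy
        rcases le_or_gt a0 a2 with hcase | hcase
        · have hp : (0 : ℤ) ≤ ((a2 : ℤ) - a0) * ((q : ℤ) ^ 2 - 1) := by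
            apply mul_nonneg
            · have hc' : (a0 : ℤ) ≤ a2 := by exact_mod_cast hcase
              linarith only [hc']
            · have hc' : (1 : ℤ) ≤ (q : ℤ) ^ 2 := by
                exact_mod_cast Nat.one_le_pow 2 q (by omega)
              linarith only [hc']
          linarith only [hxy, hp, hxdz]
        · have hq3 : (q : ℤ) ≤ (q : ℤ) ^ 3 := by
            have hc' : q ^ 1 ≤ q ^ 3 := Nat.pow_le_pow_right (by omega) (by norm_num)
            rw [pow_one] at hc'
            exact_mod_cast hc'
          have hp : ((a0 : ℤ) - a2) * (q : ℤ) ≤ ((a0 : ℤ) - a2) * (q : ℤ) ^ 3 := by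
            apply mul_le_mul_of_nonneg_left hq3
            have hc' : (a2 : ℤ) < a0 := by exact_mod_cast hcase
            linarith only [hc']
          linarith only [hqxy, hp]
  · -- digit condition → n ≤ x + r1
    rintro (hcase | ⟨hc1, hc2⟩)
    · have h' : q ≤ a2 + a3 := by omega
      have m : q * q ^ 3 ≤ (a2 + a3) * q ^ 3 := Nat.mul_le_mul_right _ h'
      have hqq : q * q ^ 3 = q ^ 4 := by ring
      linarith only [hgroup, hq4, m, hqq, Nat.zero_le x, Nat.zero_le (a0 + a3), Nat.zero_le ((a0 + a1) * q), Nat.zero_le ((a1 + a2) * q ^ 2)]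
    · have h' : q ≤ a1 + a2 := by omega
      have heq : a2 + a3 + 1 = q := by omega
      have m1 : q * q ^ 2 ≤ (a1 + a2) * q ^ 2 := Nat.mul_le_mul_right _ h'
      have m2 : (a2 + a3 + 1) * q ^ 3 = q * q ^ 3 := by rw [heq]
      have e1 : (a2 + a3 + 1) * q ^ 3 = (a2 + a3) * q ^ 3 + q ^ 3 := by ring
      have e2 : q * q ^ 2 = q ^ 3 := by ring
      have e3 : q * q ^ 3 = q ^ 4 := by ring
      linarith only [hgroup, hq4, m1, m2, e1, e2, e3, Nat.zero_le x, Nat.zero_le (a0 + a3), Nat.zero_le ((a0 + a1) * q)]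
end

section
/- Let q ≥ 2 and n = q^4 - 1. Every x with (q^4-1)/(q+1) < x < q^3 + q that is the minimal element of its cyclotomic coset I_x = {x, x·q^2 mod n} (with respect to q^2) has q-adic expansion x = i + j·q + (q-1)·q^2 + 0·q^3 with 0 ≤ i ≤ q-1 and 1 ≤ j ≤ q-1, and there are exactly q(q-1) such minimal representatives. -/
lemma swap_mod (q n a b : ℕ) (hq : 2 ≤ q) (hn : n = q ^ 4 - 1)
    (h : b + a * q ^ 2 < n) : ((a + b * q ^ 2) * q ^ 2) % n = b + a * q ^ 2 := by
  have h1 : 1 ≤ q ^ 4 := Nat.one_le_pow _ _ (by omega)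
  have h4 : q ^ 2 * q ^ 2 = n + 1 := by
    rw [show q ^ 2 * q ^ 2 = q ^ 4 by ring]; omega
  have key : (a + b * q ^ 2) * q ^ 2 = (b + a * q ^ 2) + b * n := by
    calc (a + b * q ^ 2) * q ^ 2 = a * q ^ 2 + b * (q ^ 2 * q ^ 2) := by ring
    _ = a * q ^ 2 + b * (n + 1) := by rw [h4]
    _ = (b + a * q ^ 2) + b * n := by ring
  rw [key, Nat.add_mul_mod_self_right, Nat.mod_eq_of_lt h]

lemma cond_iff (q x : ℕ) (hq : 2 ≤ q)
    (hx1 : q ^ 3 - q ^ 2 + q - 1 < x) (hx2 : x < q ^ 3 + q) :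
    (x ≤ (x * q ^ 2) % (q ^ 4 - 1)) ↔ x < q ^ 3 := by
  have hqlt : q < q ^ 2 := by nlinarith
  have hs : (q - 1) * q ^ 2 + q ^ 2 = q ^ 3 := by
    have h : q - 1 + 1 = q := by omega
    calc (q - 1) * q ^ 2 + q ^ 2 = (q - 1 + 1) * q ^ 2 := by ring
    _ = q * q ^ 2 := by rw [h]
    _ = q ^ 3 := by ring
  have h34 : 2 * q ^ 3 ≤ q ^ 4 := by nlinarith
  constructor
  · intro hx3
    by_contra h
    push_neg at h
    set a := x - q ^ 3 with ha
    have hxa : x = a + q * q ^ 2 := by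
      have : q * q ^ 2 = q ^ 3 := by ring
      omega
    have haq : a < q := by omega
    have ha1 : a * q ^ 2 + q ^ 2 ≤ q ^ 3 := by
      have h1 : (a + 1) * q ^ 2 ≤ q * q ^ 2 := Nat.mul_le_mul_right _ (by omega)
      have h2 : q * q ^ 2 = q ^ 3 := by ring
      nlinarith
    have hlt : q + a * q ^ 2 < q ^ 4 - 1 := by omega
    rw [hxa, swap_mod q (q ^ 4 - 1) a q hq rfl hlt] at hx3
    omega
  · intro hx3
    set a := x - (q - 1) * q ^ 2 with ha
    have hxa : x = a + (q - 1) * q ^ 2 := by omega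
    have haq : q ≤ a := by omega
    have ha2 : a < q ^ 2 := by omega
    have ha1 : a * q ^ 2 + q ^ 2 ≤ q ^ 2 * q ^ 2 := by
      have h1 : (a + 1) * q ^ 2 ≤ q ^ 2 * q ^ 2 := Nat.mul_le_mul_right _ (by omega)
      nlinarith
    have hq4 : q ^ 2 * q ^ 2 = q ^ 4 := by ring
    have hlt : (q - 1) + a * q ^ 2 < q ^ 4 - 1 := by omega
    rw [hxa, swap_mod q (q ^ 4 - 1) a (q - 1) hq rfl hlt]
    obtain ⟨t, ht⟩ : ∃ t, a = (q - 1) + t := ⟨a - (q - 1), by omega⟩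
    have hexp : a * q ^ 2 = (q - 1) * q ^ 2 + t * q ^ 2 := by rw [ht]; ring
    have ht2 : t ≤ t * q ^ 2 := Nat.le_mul_of_pos_right _ (by positivity)
    omega

/-- The interlude `[(q^4-1)/(q+1), q^3+q]_M`: its minimal representatives of
`q^2`-cyclotomic cosets modulo `n = q^4 - 1` have digits `(i, j, q-1, 0)` with
`j ≥ 1`, and there are exactly `q(q-1)` of them. -/
theorem stmt11 (q n : ℕ) (hq : 2 ≤ q) (hn : n = q ^ 4 - 1) :
    (∀ x : ℕ, (q ^ 4 - 1) / (q + 1) < x → x < q ^ 3 + q → x ≤ (x * q ^ 2) % n →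
      ∃ i j : ℕ, i ≤ q - 1 ∧ 1 ≤ j ∧ j ≤ q - 1 ∧
        x = i + j * q + (q - 1) * q ^ 2 + 0 * q ^ 3) ∧
    ((Finset.Ioo ((q ^ 4 - 1) / (q + 1)) (q ^ 3 + q)).filter
        (fun x => x ≤ (x * q ^ 2) % n)).card = q * (q - 1) := by
  subst hn
  have hq23 : q ^ 2 ≤ q ^ 3 := Nat.pow_le_pow_right (by omega) (by omega)
  have hqlt : q < q ^ 2 := by nlinarith
  have hs : (q - 1) * q ^ 2 + q ^ 2 = q ^ 3 := by
    have h : q - 1 + 1 = q := by omega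
    calc (q - 1) * q ^ 2 + q ^ 2 = (q - 1 + 1) * q ^ 2 := by ring
    _ = q * q ^ 2 := by rw [h]
    _ = q ^ 3 := by ring
  have hL : (q ^ 4 - 1) / (q + 1) = q ^ 3 - q ^ 2 + q - 1 := by
    have h1 : 1 ≤ q ^ 4 := Nat.one_le_pow _ _ (by omega)
    have h : q ^ 4 - 1 = (q + 1) * (q ^ 3 - q ^ 2 + q - 1) := by
      zify [hq23, show 1 ≤ q ^ 3 - q ^ 2 + q by omega, h1]
      ring
    rw [h, Nat.mul_div_cancel_left _ (by omega)]
  rw [hL]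
  constructor
  · intro x hx1 hx2 hx3
    have hx3' : x < q ^ 3 := (cond_iff q x hq hx1 hx2).mp hx3
    set a := x - (q - 1) * q ^ 2 with ha
    have hxa : x = a + (q - 1) * q ^ 2 := by omega
    have haq : q ≤ a := by omega
    have ha2 : a < q ^ 2 := by omega
    refine ⟨a % q, a / q, ?_, ?_, ?_, ?_⟩
    · have := Nat.mod_lt a (show 0 < q by omega)
      omega
    · rw [Nat.one_le_div_iff (by omega)]; exact haq
    · have : a / q < q := Nat.div_lt_of_lt_mul (by nlinarith)
      omega
    · rw [Nat.mod_add_div']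
      omega
  · have hset : ((Finset.Ioo (q ^ 3 - q ^ 2 + q - 1) (q ^ 3 + q)).filter
        (fun x => x ≤ (x * q ^ 2) % (q ^ 4 - 1))) =
        Finset.Ico (q ^ 3 - q ^ 2 + q) (q ^ 3) := by
      ext x
      simp only [Finset.mem_filter, Finset.mem_Ioo, Finset.mem_Ico]
      constructor
      · rintro ⟨⟨h1, h2⟩, h3⟩
        have := (cond_iff q x hq h1 h2).mp h3
        omega
      · rintro ⟨h1, h2⟩
        have hx1 : q ^ 3 - q ^ 2 + q - 1 < x := by omega
        have hx2 : x < q ^ 3 + q := by omega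
        exact ⟨⟨hx1, hx2⟩, (cond_iff q x hq hx1 hx2).mpr h2⟩
    rw [hset, Nat.card_Ico]
    have hm : q * (q - 1) + q = q * q := by
      rw [← Nat.mul_succ]; congr 1; omega
    have : q * q = q ^ 2 := by ring
    omega
end

section
/- Let q ≥ 2 and n = q^4 - 1, and fix 0 ≤ a_2 ≤ q-2, 0 ≤ a_3 ≤ q-1. The set of x with a_2 + a_3·q + a_2·q^2 + a_3·q^3 < x < (a_2+1) + a_3·q + (a_2+1)·q^2 + a_3·q^3 such that x is the minimal element of its cyclotomic coset I_x = {x, x·q^2 mod n} with respect to q^2 equals { i + j·q + a_2·q^2 + a_3·q^3 : (0 ≤ i ≤ q-1 and a_3 < j ≤ q-1) or (a_2 < i ≤ q-1 and j = a_3) }. -/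
set_option maxHeartbeats 1000000 in
private lemma modkey (q A C : ℕ) (hq : 1 ≤ q) (h : C + A * q ^ 2 < q ^ 4 - 1) :
    ((A + C * q ^ 2) * q ^ 2) % (q ^ 4 - 1) = C + A * q ^ 2 := by
  have h1 : 1 ≤ q ^ 4 := Nat.one_le_pow _ _ hq
  have he : (A + C * q ^ 2) * q ^ 2 = (C + A * q ^ 2) + C * (q ^ 4 - 1) := by
    zify [h1]; ring
  rw [he, Nat.add_mul_mod_self_right, Nat.mod_eq_of_lt h]

set_option maxHeartbeats 1000000 in
/-- Description of the elements of the interlude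
`[(a2,a3,a2,a3), (a2+1,a3,a2+1,a3)]_M` of minimal representatives of
`q^2`-cyclotomic cosets modulo `n = q^4 - 1`. -/
theorem stmt12 (q n : ℕ) (hq : 2 ≤ q) (hn : n = q ^ 4 - 1)
    (a2 a3 : ℕ) (h2 : a2 ≤ q - 2) (h3 : a3 ≤ q - 1) :
    {x : ℕ | a2 + a3 * q + a2 * q ^ 2 + a3 * q ^ 3 < x ∧
        x < (a2 + 1) + a3 * q + (a2 + 1) * q ^ 2 + a3 * q ^ 3 ∧
        x ≤ (x * q ^ 2) % n}
    = {x : ℕ | ∃ i j : ℕ, x = i + j * q + a2 * q ^ 2 + a3 * q ^ 3 ∧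
        ((i ≤ q - 1 ∧ a3 < j ∧ j ≤ q - 1) ∨ (a2 < i ∧ i ≤ q - 1 ∧ j = a3))} := by
  subst hn
  have hq0 : 0 < q := by omega
  have hq2pos : 0 < q ^ 2 := by positivity
  have ha2 : a2 + 2 ≤ q := by omega
  have ha3 : a3 + 1 ≤ q := by omega
  have hq4 : q ^ 4 = q ^ 2 * q ^ 2 := by ring
  have hqq : q ^ 2 = q * q := by ring
  obtain ⟨B, hB⟩ : ∃ B, B = a2 + a3 * q := ⟨_, rfl⟩
  have hBle : B + 2 ≤ q ^ 2 := by
    have h := mul_le_mul_left (show a3 + 1 ≤ q from ha3) q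
    linarith
  have hLr : a2 + a3 * q + a2 * q ^ 2 + a3 * q ^ 3 = B + B * q ^ 2 := by rw [hB]; ring
  have hUr : (a2 + 1) + a3 * q + (a2 + 1) * q ^ 2 + a3 * q ^ 3
      = (B + 1) + (B + 1) * q ^ 2 := by rw [hB]; ring
  ext x
  simp only [Set.mem_setOf_eq, hLr, hUr]
  constructor
  · rintro ⟨hL, hU, hmod⟩
    obtain ⟨A, C, hA, hx⟩ : ∃ A C, A < q ^ 2 ∧ x = A + C * q ^ 2 :=
      ⟨x % q ^ 2, x / q ^ 2, Nat.mod_lt _ hq2pos, (Nat.mod_add_div' x (q ^ 2)).symm⟩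
    subst hx
    have hCB : C = B := by
      rcases lt_trichotomy C B with h | h | h
      · exfalso
        have h1 : (C + 1) * q ^ 2 ≤ B * q ^ 2 := mul_le_mul_left (by omega) _
        nlinarith
      · exact h
      · exfalso
        have hC1 : C = B + 1 := by
          by_contra hc
          have h1 : (B + 2) * q ^ 2 ≤ C * q ^ 2 := mul_le_mul_left (by omega) _
          nlinarith
        subst hC1
        have hAB : A ≤ B := by nlinarith
        have h1 : A * q ^ 2 ≤ B * q ^ 2 := mul_le_mul_left hAB _
        have hb2 : (B + 2) * q ^ 2 ≤ q ^ 2 * q ^ 2 := mul_le_mul_left hBle _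
        have hbound : (B + 1) + A * q ^ 2 < q ^ 4 - 1 := by
          refine Nat.lt_sub_of_add_lt ?_
          nlinarith
        rw [modkey q A (B + 1) (by omega) hbound] at hmod
        nlinarith
    rw [hCB] at hL hU hmod ⊢
    have hAgtB : B < A := by linarith
    obtain ⟨i, j, hi, hj, hdec⟩ : ∃ i j, i < q ∧ j < q ∧ A = i + j * q :=
      ⟨A % q, A / q, Nat.mod_lt _ hq0,
        Nat.div_lt_of_lt_mul (by linarith),
        (Nat.mod_add_div' A q).symm⟩
    subst hdec
    refine ⟨i, j, by rw [hB]; ring, ?_⟩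
    rcases lt_trichotomy j a3 with h | h | h
    · exfalso
      have h1 : (j + 1) * q ≤ a3 * q := mul_le_mul_left (by omega) _
      nlinarith
    · right
      subst h
      have : a2 < i := by linarith
      exact ⟨this, by omega, rfl⟩
    · left; exact ⟨by omega, h, by omega⟩
  · rintro ⟨i, j, hx, hcase⟩
    have hi : i < q := by rcases hcase with ⟨h1, _, _⟩ | ⟨_, h1, _⟩ <;> omega
    have hj : j < q := by rcases hcase with ⟨_, _, h1⟩ | ⟨_, _, h1⟩ <;> omega
    have hAq : i + j * q < q ^ 2 := by
      have h := mul_le_mul_left (show j + 1 ≤ q by omega) q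
      linarith
    have hBA : B < i + j * q := by
      rcases hcase with ⟨_, h1, _⟩ | ⟨h1, _, h2⟩
      · have h := mul_le_mul_left (show a3 + 1 ≤ j by omega) q
        nlinarith
      · subst h2; linarith
    have hxr : x = (i + j * q) + B * q ^ 2 := by rw [hx, hB]; ring
    have hbound : B + (i + j * q) * q ^ 2 < q ^ 4 - 1 := by
      refine Nat.lt_sub_of_add_lt ?_
      have h1 : (i + j * q + 1) * q ^ 2 ≤ q ^ 2 * q ^ 2 := mul_le_mul_left (by omega) _
      nlinarith
    refine ⟨by rw [hxr]; linarith, ?_, ?_⟩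
    · rw [hxr]
      have h1 : (B + 1) * q ^ 2 = B * q ^ 2 + q ^ 2 := by ring
      linarith
    · rw [hxr, modkey q (i + j * q) B (by omega) hbound]
      have h1 : (B + 1) * q ^ 2 ≤ (i + j * q) * q ^ 2 := mul_le_mul_left (by omega) _
      nlinarith
end

section
/- Let q ≥ 2 and n = q^4 - 1, and fix 0 ≤ a_2 ≤ q-2, 0 ≤ a_3 ≤ q-1 with a_2 + a_3 < q - 1. Then the number of x in the interlude [(a_2,a_3,a_2,a_3), (a_2+1,a_3,a_2+1,a_3)]_M (i.e., x strictly between a_2 + a_3·q + a_2·q^2 + a_3·q^3 and (a_2+1) + a_3·q + (a_2+1)·q^2 + a_3·q^3 that are minimal elements of their q^2-cyclotomic coset) whose coset is SR-asymmetric equals a_3·(q - a_3). -/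
set_option linter.unusedVariables false

private lemma rot2' (q n v w : ℕ) (hq4 : n + 1 = q^4) (h : w + v * q^2 < n) :
    ((v + w * q^2) * q^2) % n = w + v * q^2 := by
  have key : (v + w * q^2) * q^2 = n * w + (w + v * q^2) := by
    calc (v + w * q^2) * q^2 = v * q^2 + w * q^4 := by ring
    _ = v * q^2 + w * (n+1) := by rw [hq4]
    _ = n * w + (w + v * q^2) := by ring
  rw [key, Nat.mul_add_mod, Nat.mod_eq_of_lt h]

private lemma rot1' (q n v w : ℕ) (hq4 : n + 1 = q^4) (h : w + v * q < n) :
    ((v + w * q^3) * q) % n = w + v * q := by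
  have key : (v + w * q^3) * q = n * w + (w + v * q) := by
    calc (v + w * q^3) * q = v * q + w * q^4 := by ring
    _ = v * q + w * (n+1) := by rw [hq4]
    _ = n * w + (w + v * q) := by ring
  rw [key, Nat.mul_add_mod, Nat.mod_eq_of_lt h]

private lemma rot3' (q n v w : ℕ) (hq4 : n + 1 = q^4) (h : w + v * q^3 < n) :
    ((v + w * q) * q^3) % n = w + v * q^3 := by
  have key : (v + w * q) * q^3 = n * w + (w + v * q^3) := by
    calc (v + w * q) * q^3 = v * q^3 + w * q^4 := by ring
    _ = v * q^3 + w * (n+1) := by rw [hq4]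
    _ = n * w + (w + v * q^3) := by ring
  rw [key, Nat.mul_add_mod, Nat.mod_eq_of_lt h]

private lemma recip' (n c m : ℕ) (hm : c % n = m) (h0 : 0 < m) (h1 : m < n) :
    (((n:ℤ) - (c:ℤ)) % (n:ℤ)).toNat = n - m := by
  obtain ⟨k, hk⟩ : ∃ k, c = n * k + m := ⟨c / n, by rw [← hm]; exact (Nat.div_add_mod c n).symm⟩
  have h3 : (((n:ℤ) - c) % n) = ((n - m : ℕ) : ℤ) := by
    have hnm : ((n - m : ℕ) : ℤ) = (n:ℤ) - m := by exact_mod_cast Nat.cast_sub h1.le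
    rw [hnm]
    have he : (n:ℤ) - c = ((n:ℤ) - m) + (-(k:ℤ)) * n := by rw [hk]; push_cast; ring
    rw [he, Int.add_mul_emod_self_right]
    have h4 : (0:ℤ) ≤ (n:ℤ) - m := by
      have : (m:ℤ) ≤ n := by exact_mod_cast h1.le
      linarith
    have h5 : (n:ℤ) - m < n := by
      have : (0:ℤ) < m := by exact_mod_cast h0
      linarith
    exact Int.emod_eq_of_lt h4 h5
  rw [h3, Int.toNat_natCast]

private lemma nsub_lt' (n m x : ℕ) (h : n < x + m) (hx : 0 < x) : n - m < x := by omega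
private lemma nlt_sub' (n m x : ℕ) (h : x + m < n) : x < n - m := by omega
private lemma b2eq' {b2 a2 c : ℕ} (h : b2 + c = a2 + c) : b2 = a2 := by omega


section
variable {q b0 b1 b2 b3 a2 a3 k n : ℕ}

-- A1
private lemma A1 (hq : 2 ≤ q) (hb0 : b0 < q) (hb1 : b1 < q) (hb2 : b2 < q) (hF : a2+a3+2 ≤ q)
    (hB : b0 + b1*q + b2*q^2 + b3*q^3 < a2 + 1 + a3*q + (a2+1)*q^2 + a3*q^3)
    (hc : q ≤ b3) : False := by
  have h1 : q*q^3 ≤ b3*q^3 := mul_le_mul_left hc _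
  have MA : (a2+a3+2)*q ≤ q*q := mul_le_mul_left hF q
  have MA2 : (a2+a3+2)*q^2 ≤ q*q^2 := mul_le_mul_left hF _
  have MA3 : (a2+a3+2)*q^3 ≤ q*q^3 := mul_le_mul_left hF _
  nlinarith [hB, h1, MA, MA2, MA3, Nat.zero_le (b0), Nat.zero_le (b1*q), Nat.zero_le (b2*q^2),
    Nat.zero_le (a2*q), Nat.zero_le (a3*q^2), Nat.zero_le (a2*q^3)]

-- A2
private lemma A2 (hq : 2 ≤ q) (hb0 : b0 < q) (hb1 : b1 < q)
    (hA : a2 + a3*q + a2*q^2 + a3*q^3 < b0 + b1*q + b2*q^2 + b3*q^3)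
    (hw : b2 + b3*q < a2 + a3*q) : False := by
  have h1 : (b2 + b3*q + 1) * q^2 ≤ (a2 + a3*q) * q^2 := mul_le_mul_left hw _
  have M0 : (b0+1)*q ≤ q*q := mul_le_mul_left hb0 q
  have M1 : (b1+1)*q^2 ≤ q*q^2 := mul_le_mul_left hb1 _
  nlinarith [hA, h1, M0, M1, Nat.zero_le (a2), Nat.zero_le (a3*q), Nat.zero_le (a2*q^2), Nat.zero_le (a3*q^3)]

-- A3
private lemma A3 (hq : 2 ≤ q) (hF : a2+a3+2 ≤ q)
    (hB : b0 + b1*q + b2*q^2 + b3*q^3 < a2 + 1 + a3*q + (a2+1)*q^2 + a3*q^3)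
    (hw2 : a2 + a3*q + 1 < b2 + b3*q) : False := by
  have h1 : (a2 + a3*q + 2) * q^2 ≤ (b2 + b3*q) * q^2 := mul_le_mul_left hw2 _
  have MA : (a2+a3+2)*q ≤ q*q := mul_le_mul_left hF q
  nlinarith [hB, h1, MA, hF, Nat.zero_le b0, Nat.zero_le (b1*q)]

-- A4
private lemma A4 (hq : 2 ≤ q)
    (hB : b0 + b1*q + b2*q^2 + b3*q^3 < a2 + 1 + a3*q + (a2+1)*q^2 + a3*q^3)
    (hw1 : b2 + b3*q = a2 + a3*q + 1) : b0 + b1*q ≤ a2 + a3*q := by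
  have hw1q : (b2 + b3*q)*q^2 = (a2 + a3*q + 1)*q^2 := by rw [hw1]
  nlinarith [hB, hw1q]

-- A5
private lemma A5 (hq : 2 ≤ q) (hF : a2+a3+2 ≤ q) (hvle : b0 + b1*q ≤ a2 + a3*q) :
    b0 + b1*q + 2 ≤ q^2 := by
  have MA : (a2+a3+2)*q ≤ q*q := mul_le_mul_left hF q
  nlinarith [hvle, MA, hF, Nat.zero_le (a2*q)]

-- A6
private lemma A6 (hq : 2 ≤ q) (hF : a2+a3+2 ≤ q) (hw1 : b2 + b3*q = a2 + a3*q + 1)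
    (hv2 : b0 + b1*q + 2 ≤ q^2) :
    (b2 + b3*q) + (b0+b1*q)*q^2 + 2 ≤ q^4 := by
  have hv1 : (b0 + b1*q + 2) * q^2 ≤ q^2*q^2 := mul_le_mul_left hv2 _
  have MA : (a2+a3+2)*q ≤ q*q := mul_le_mul_left hF q
  nlinarith [hw1, MA, hF, hv1, Nat.zero_le (a2*q)]

-- A7
private lemma A7 (hq : 2 ≤ q) (hF : a2+a3+2 ≤ q)
    (hmin : (b0+b1*q) + (b2+b3*q)*q^2 ≤ (b2+b3*q) + (b0+b1*q)*q^2)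
    (hw1 : b2 + b3*q = a2 + a3*q + 1) (hvle : b0 + b1*q ≤ a2 + a3*q) : False := by
  have hw1q : (b2 + b3*q)*q^2 = (a2 + a3*q + 1)*q^2 := by rw [hw1]
  have hmul : (b0+b1*q)*q^2 ≤ (a2+a3*q)*q^2 := mul_le_mul_left hvle _
  have MA : (a2+a3+2)*q ≤ q*q := mul_le_mul_left hF q
  nlinarith [hmin, hw1, hw1q, hvle, MA, hF, hmul, Nat.zero_le (a2*q)]

-- A9
private lemma A9 (hq : 2 ≤ q) (hb0 : b0 < q) (hc : b1 + 1 ≤ a3)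
    (hvu : a2 + a3*q < b0 + b1*q) : False := by
  have hh := mul_le_mul_left hc q
  nlinarith [hvu, hb0, hh, Nat.zero_le a2]

-- A10
private lemma A10 (hq : 2 ≤ q) (hvu : a2 + a3*q < b0 + b1*q) :
    0 < a3 + b0*q + b1*q^2 + a2*q^3 := by
  have h0 : 1 ≤ b0 + b1*q := Nat.lt_of_le_of_lt (Nat.zero_le _) hvu
  have h1 : 1*q ≤ (b0 + b1*q)*q := mul_le_mul_left h0 q
  nlinarith [h1, Nat.zero_le (a3), Nat.zero_le (a2*q^3)]

-- A11
private lemma A11 (hq : 2 ≤ q) (hvu : a2 + a3*q < b0 + b1*q) :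
    0 < b1 + a2*q + a3*q^2 + b0*q^3 := by
  have hb01 : 0 < b0 + b1 := by
    by_contra hc; push_neg at hc
    have hh := mul_le_mul_left (show b1 ≤ 0 by omega) q
    nlinarith [hvu, hh]
  have h3 : b0*1 ≤ b0*q^3 := mul_le_mul_right (Nat.one_le_pow 3 q (by omega)) b0
  nlinarith [hb01, h3, Nat.zero_le (a2*q), Nat.zero_le (a3*q^2)]

-- A12
private lemma A12 (hq : 2 ≤ q) (hb0 : b0 < q) (hb1 : b1 < q) (hF : a2+a3+2 ≤ q) :
    (b0 + b1*q + a2*q^2 + a3*q^3) + (a3 + b0*q + b1*q^2 + a2*q^3) + 2 ≤ q^4 := by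
  have M0 : (b0+1)*q ≤ q*q := mul_le_mul_left hb0 q
  have M1 : (b1+1)*q ≤ q*q := mul_le_mul_left hb1 q
  have M12 : (b1+1)*q^2 ≤ q*q^2 := mul_le_mul_left hb1 _
  have MA2 : (a2+a3+2)*q^2 ≤ q*q^2 := mul_le_mul_left hF _
  have MA3 : (a2+a3+2)*q^3 ≤ q*q^3 := mul_le_mul_left hF _
  nlinarith [M0, M1, M12, MA2, MA3, hF, hb0, Nat.zero_le (a3*q^2), Nat.zero_le (a2*q^2)]

-- A13
private lemma A13 (hq : 2 ≤ q) (hb0 : b0 < q) (hb1 : b1 < q) (hF : a2+a3+2 ≤ q)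
    (hc : b0 + a3 + 1 ≤ q) :
    (b0 + b1*q + a2*q^2 + a3*q^3) + (b1 + a2*q + a3*q^2 + b0*q^3) + 2 ≤ q^4 := by
  have M1 : (b1+1)*q ≤ q*q := mul_le_mul_left hb1 q
  have MA : (a2+a3+2)*q ≤ q*q := mul_le_mul_left hF q
  have MA2 : (a2+a3+2)*q^2 ≤ q*q^2 := mul_le_mul_left hF _
  have HC : (b0+a3+1)*q^3 ≤ q*q^3 := mul_le_mul_left hc _
  nlinarith [M1, MA, MA2, HC, hF, hb0, hb1]

-- A14
private lemma A14 (hq : 2 ≤ q) (hb1l : a3 ≤ b1) (hb02 : a2 + 2 ≤ b0) :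
    a2 + a3*q + a2*q^2 + a3*q^3 < b0 + b1*q + a2*q^2 + a3*q^3 := by
  have h := mul_le_mul_left hb1l q
  nlinarith [h]

-- A15
private lemma A15 (hq : 2 ≤ q) (hb0 : b0 < q) (hb1 : b1 < q) :
    b0 + b1*q + a2*q^2 + a3*q^3 < a2 + 1 + a3*q + (a2+1)*q^2 + a3*q^3 := by
  have M1 : (b1+1)*q ≤ q*q := mul_le_mul_left hb1 q
  nlinarith [M1, hb0, Nat.zero_le (a2), Nat.zero_le (a3*q), Nat.zero_le (a2*q^2)]

-- A16
private lemma A16 (hq : 2 ≤ q) (hb0 : b0 < q) (hb1 : b1 < q) (hF : a2+a3+2 ≤ q) :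
    (a2 + a3*q) + (b0+b1*q)*q^2 + 2 ≤ q^4 := by
  have M1 : (b1+1)*q ≤ q*q := mul_le_mul_left hb1 q
  have MA : (a2+a3+2)*q ≤ q*q := mul_le_mul_left hF q
  have hv2 : b0 + b1*q + 1 ≤ q^2 := by nlinarith [M1, hb0]
  have hv1 : (b0 + b1*q + 1) * q^2 ≤ q^2*q^2 := mul_le_mul_left hv2 _
  nlinarith [MA, hF, hv1, Nat.zero_le (a2*q)]

-- A17
private lemma A17 (hq : 2 ≤ q) :
    (a2 + a3*q + k) + (a2 + a3*q)*q^2 ≤ (a2 + a3*q) + (a2 + a3*q + k)*q^2 := by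
  have hk2 : k*1 ≤ k*q^2 := mul_le_mul_right (Nat.one_le_pow 2 q (by omega)) k
  nlinarith [hk2]

-- A18
private lemma A18 (hq : 2 ≤ q) (hq4 : n + 1 = q^4) (hba : q ≤ b0 + a3) :
    n < (b0 + b1*q + a2*q^2 + a3*q^3) + (b1 + a2*q + a3*q^2 + b0*q^3) := by
  have HB : q*q^3 ≤ (b0+a3)*q^3 := mul_le_mul_left hba _
  nlinarith [HB, hq4, Nat.zero_le (b0), Nat.zero_le (b1*q), Nat.zero_le (a2*q^2),
    Nat.zero_le b1, Nat.zero_le (a2*q), Nat.zero_le (a3*q^2)]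

-- A19
private lemma A19 (hb0p : 0 < b0) : 0 < b0 + b1*q + a2*q^2 + a3*q^3 := by
  nlinarith [hb0p, Nat.zero_le (b1*q), Nat.zero_le (a2*q^2), Nat.zero_le (a3*q^3)]

-- A8
private lemma A8 (hA : a2 + a3*q + a2*q^2 + a3*q^3 < b0 + b1*q + a2*q^2 + a3*q^3) :
    a2 + a3*q < b0 + b1*q := by linarith

-- trichotomy b3 parts
private lemma Atri1 (hq : 2 ≤ q) (hb2 : b2 < q) (hw : b2 + b3*q = a2 + a3*q) (h : b3 < a3) : False := by
  have hh := mul_le_mul_left (show b3+1 ≤ a3 from h) q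
  nlinarith [hw, hb2, hh, Nat.zero_le a2]

private lemma Atri2 (hq : 2 ≤ q) (hF : a2+a3+2 ≤ q) (hb2 : b2 < q) (hw : b2 + b3*q = a2 + a3*q) (h : a3 < b3) : False := by
  have hh := mul_le_mul_left (show a3+1 ≤ b3 from h) q
  nlinarith [hw, hF, hh, Nat.zero_le b2]

end
private lemma hm1' (q n b0 b1 a2 a3 : ℕ) (hq : 2 ≤ q) (hq4 : n + 1 = q^4)
    (hb0 : b0 < q) (hb1 : b1 < q) (hF : a2 + a3 + 2 ≤ q) :
    (q * (b0 + b1*q + a2*q^2 + a3*q^3)) % n = a3 + b0*q + b1*q^2 + a2*q^3 := by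
  have hx : q * (b0 + b1*q + a2*q^2 + a3*q^3) = ((b0 + b1*q + a2*q^2) + a3*q^3) * q := by ring
  have hlt : a3 + (b0 + b1*q + a2*q^2) * q < n := by
    have M0 : (b0+1)*q ≤ q*q := mul_le_mul_left hb0 q
    have M1 : (b1+1)*(q*q) ≤ q*(q*q) := mul_le_mul_left hb1 _
    have M2 : (a2+2)*(q*q*q) ≤ q*(q*q*q) := mul_le_mul_left (by omega) _
    have key : a3 + (b0 + b1*q + a2*q^2) * q + 2 ≤ q^4 := by nlinarith [M0, M1, M2, hF]
    linarith
  rw [hx, rot1' q n _ a3 hq4 hlt]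
  ring

private lemma hm3'' (q n b0 b1 a2 a3 : ℕ) (hq : 2 ≤ q) (hq4 : n + 1 = q^4)
    (hb0 : b0 < q) (hb1 : b1 < q) (hF : a2 + a3 + 2 ≤ q) :
    (q^3 * (b0 + b1*q + a2*q^2 + a3*q^3)) % n = b1 + a2*q + a3*q^2 + b0*q^3 := by
  have hx : q^3 * (b0 + b1*q + a2*q^2 + a3*q^3)
      = (b0 + (b1 + a2*q + a3*q^2) * q) * q^3 := by ring
  have hlt : (b1 + a2*q + a3*q^2) + b0*q^3 < n := by
    have M0 : (b0+1)*(q*q*q) ≤ q*(q*q*q) := mul_le_mul_left hb0 _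
    have M1 : (a2+2)*q ≤ q*q := mul_le_mul_left (by omega) q
    have M2 : (a3+2)*(q*q) ≤ q*(q*q) := mul_le_mul_left (by omega) _
    have key : (b1 + a2*q + a3*q^2) + b0*q^3 + 2 ≤ q^4 := by nlinarith [M0, M1, M2, hb1]
    linarith
  rw [hx, rot3' q n b0 (b1 + a2*q + a3*q^2) hq4 hlt]

private lemma recip1' (q n b0 b1 a2 a3 : ℕ) (hq : 2 ≤ q) (hq4 : n + 1 = q^4)
    (hb0 : b0 < q) (hb1 : b1 < q) (hF : a2 + a3 + 2 ≤ q)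
    (hpos : 0 < a3 + b0*q + b1*q^2 + a2*q^3) :
    (((n:ℤ) - (q:ℤ) * ((b0 + b1*q + a2*q^2 + a3*q^3 : ℕ) : ℤ)) % (n:ℤ)).toNat
      = n - (a3 + b0*q + b1*q^2 + a2*q^3) := by
  have hm := hm1' q n b0 b1 a2 a3 hq hq4 hb0 hb1 hF
  have hn0 : 0 < n := by
    have h16 : 2^4 ≤ q^4 := Nat.pow_le_pow_left hq 4
    have h2 : (2:ℕ)^4 = 16 := by norm_num
    linarith
  have hlt : a3 + b0*q + b1*q^2 + a2*q^3 < n := hm ▸ Nat.mod_lt _ hn0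
  have hc : ((n:ℤ) - (q:ℤ) * ((b0 + b1*q + a2*q^2 + a3*q^3 : ℕ) : ℤ))
      = ((n:ℤ) - ((q * (b0 + b1*q + a2*q^2 + a3*q^3) : ℕ) : ℤ)) := by push_cast; ring
  rw [hc, recip' n _ _ hm hpos hlt]

private lemma recip3' (q n b0 b1 a2 a3 : ℕ) (hq : 2 ≤ q) (hq4 : n + 1 = q^4)
    (hb0 : b0 < q) (hb1 : b1 < q) (hF : a2 + a3 + 2 ≤ q)
    (hpos : 0 < b1 + a2*q + a3*q^2 + b0*q^3) :
    (((n:ℤ) - (q:ℤ) ^ 3 * ((b0 + b1*q + a2*q^2 + a3*q^3 : ℕ) : ℤ)) % (n:ℤ)).toNat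
      = n - (b1 + a2*q + a3*q^2 + b0*q^3) := by
  have hm := hm3'' q n b0 b1 a2 a3 hq hq4 hb0 hb1 hF
  have hn0 : 0 < n := by
    have h16 : 2^4 ≤ q^4 := Nat.pow_le_pow_left hq 4
    have h2 : (2:ℕ)^4 = 16 := by norm_num
    linarith
  have hlt : b1 + a2*q + a3*q^2 + b0*q^3 < n := hm ▸ Nat.mod_lt _ hn0
  have hc : ((n:ℤ) - (q:ℤ) ^ 3 * ((b0 + b1*q + a2*q^2 + a3*q^3 : ℕ) : ℤ))
      = ((n:ℤ) - ((q ^ 3 * (b0 + b1*q + a2*q^2 + a3*q^3) : ℕ) : ℤ)) := by push_cast; ring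
  rw [hc, recip' n _ _ hm hpos hlt]

/-- In an interlude `[(a2,a3,a2,a3),(a2+1,a3,a2+1,a3)]_M` with `a2 + a3 < q-1`,
there are exactly `a3·(q - a3)` minimal representatives of SR-asymmetric
`q^2`-cyclotomic cosets modulo `n = q^4 - 1`. -/
theorem stmt13 (q n : ℕ) (hq : 2 ≤ q) (hn : n = q ^ 4 - 1)
    (a2 a3 : ℕ) (h2 : a2 ≤ q - 2) (h3 : a3 ≤ q - 1) (hsum : a2 + a3 < q - 1) :
    ((Finset.Ioo (a2 + a3 * q + a2 * q ^ 2 + a3 * q ^ 3)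
        ((a2 + 1) + a3 * q + (a2 + 1) * q ^ 2 + a3 * q ^ 3)).filter
      (fun x => x ≤ (x * q ^ 2) % n ∧
        min ((((n : ℤ) - q * x) % n).toNat) ((((n : ℤ) - q ^ 3 * x) % n).toNat) < x)).card
    = a3 * (q - a3) := by
  have hq0 : 0 < q := by omega
  have hF : a2 + a3 + 2 ≤ q := by omega
  have hq4 : n + 1 = q ^ 4 := by
    have h1 : 1 ≤ q^4 := Nat.one_le_pow _ _ hq0
    rw [hn, Nat.sub_add_cancel h1]
  have key : ((Finset.Ioo (a2 + a3 * q + a2 * q ^ 2 + a3 * q ^ 3)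
        ((a2 + 1) + a3 * q + (a2 + 1) * q ^ 2 + a3 * q ^ 3)).filter
      (fun x => x ≤ (x * q ^ 2) % n ∧
        min ((((n : ℤ) - q * x) % n).toNat) ((((n : ℤ) - q ^ 3 * x) % n).toNat) < x))
      = ((Finset.Ico (q - a3) q) ×ˢ (Finset.Ico a3 q)).image
        (fun p : ℕ × ℕ => p.1 + p.2 * q + a2 * q ^ 2 + a3 * q ^ 3) := by
    ext x
    simp only [Finset.mem_filter, Finset.mem_Ioo, Finset.mem_image, Finset.mem_product,
      Finset.mem_Ico, Prod.exists]
    constructor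
    · rintro ⟨⟨hA, hB⟩, hmin, hasym⟩
      obtain ⟨d1, b0, he1, hb0⟩ : ∃ d r, q * d + r = x ∧ r < q :=
        ⟨x / q, x % q, Nat.div_add_mod x q, Nat.mod_lt x hq0⟩
      obtain ⟨d2, b1, he2, hb1⟩ : ∃ d r, q * d + r = d1 ∧ r < q :=
        ⟨d1 / q, d1 % q, Nat.div_add_mod d1 q, Nat.mod_lt d1 hq0⟩
      obtain ⟨b3, b2, he3, hb2⟩ : ∃ d r, q * d + r = d2 ∧ r < q :=
        ⟨d2 / q, d2 % q, Nat.div_add_mod d2 q, Nat.mod_lt d2 hq0⟩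
      have hx : x = b0 + b1 * q + b2 * q^2 + b3 * q^3 := by
        rw [← he1, ← he2, ← he3]; ring
      subst hx
      clear he1 he2 he3
      have hb3 : b3 < q := by
        by_contra hc; push_neg at hc
        exact A1 hq hb0 hb1 hb2 hF hB hc
      rcases Nat.lt_trichotomy (b2 + b3 * q) (a2 + a3 * q) with hw | hw | hw
      · exact absurd (A2 hq hb0 hb1 hA hw) (fun h => h)
      · -- main case : b2 + b3*q = a2 + a3*q
        have hb3a : a3 = b3 := by
          rcases Nat.lt_trichotomy b3 a3 with h | h | h
          · exact absurd (Atri1 hq hb2 hw h) (fun h => h)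
          · exact h.symm
          · exact absurd (Atri2 hq hF hb2 hw h) (fun h => h)
        subst hb3a
        have hb2a : a2 = b2 := (b2eq' hw).symm
        subst hb2a
        have hvu : a2 + a3*q < b0 + b1*q := A8 hA
        have hb1a : a3 ≤ b1 := by
          by_contra hc; push_neg at hc
          exact A9 hq hb0 hc hvu
        have hpos1 : 0 < a3 + b0*q + b1*q^2 + a2*q^3 := A10 hq hvu
        have hpos3 : 0 < b1 + a2*q + a3*q^2 + b0*q^3 := A11 hq hvu
        have hr1 := recip1' q n b0 b1 a2 a3 hq hq4 hb0 hb1 hF hpos1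
        have hr3 := recip3' q n b0 b1 a2 a3 hq hq4 hb0 hb1 hF hpos3
        rw [hr1, hr3] at hasym
        have hxr1 : (b0 + b1*q + a2*q^2 + a3*q^3) < n - (a3 + b0*q + b1*q^2 + a2*q^3) := by
          apply nlt_sub'
          have := A12 (q := q) (b0 := b0) (b1 := b1) (a2 := a2) (a3 := a3) hq hb0 hb1 hF
          linarith
        rcases min_lt_iff.mp hasym with hcase | hcase
        · exact absurd hcase (not_lt.mpr hxr1.le)
        · have hba : q ≤ b0 + a3 := by
            by_contra hc; push_neg at hc
            have hxm : (b0 + b1*q + a2*q^2 + a3*q^3) + (b1 + a2*q + a3*q^2 + b0*q^3) < n := by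
              have := A13 hq hb0 hb1 hF (show b0 + a3 + 1 ≤ q by omega)
              linarith
            exact absurd (nlt_sub' n _ _ hxm) (not_lt.mpr hcase.le)
          exact ⟨b0, b1, ⟨⟨by omega, hb0⟩, hb1a, hb1⟩, by ring⟩
      · -- b2 + b3*q > a2 + a3*q
        exfalso
        rcases Nat.lt_or_ge (a2 + a3*q + 1) (b2 + b3*q) with hw2 | hw2
        · exact A3 hq hF hB hw2
        · have hw1 : b2 + b3*q = a2 + a3*q + 1 := le_antisymm hw2 (Nat.succ_le_of_lt hw)
          have hvle : b0 + b1*q ≤ a2 + a3*q := A4 hq hB hw1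
          have hv2 : b0 + b1*q + 2 ≤ q^2 := A5 hq hF hvle
          have hrotpre : (b2 + b3*q) + (b0+b1*q)*q^2 < n := by
            have := A6 hq hF hw1 hv2
            linarith
          have hrotv := rot2' q n (b0+b1*q) (b2+b3*q) hq4 hrotpre
          rw [show b0 + b1*q + b2*q^2 + b3*q^3 = (b0+b1*q) + (b2+b3*q)*q^2 from by ring] at hmin
          rw [hrotv] at hmin
          exact A7 hq hF hmin hw1 hvle
    · rintro ⟨b0, b1, ⟨⟨hb0l, hb0u⟩, hb1l, hb1u⟩, rfl⟩
      have hb02 : a2 + 2 ≤ b0 := by omega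
      have hba : q ≤ b0 + a3 := by omega
      refine ⟨⟨?_, ?_⟩, ?_, ?_⟩
      · have := A14 (a2 := a2) (a3 := a3) hq hb1l hb02
        linarith
      · have := A15 (a2 := a2) (a3 := a3) hq hb0u hb1u
        linarith
      · have hrotpre : (a2 + a3*q) + (b0+b1*q)*q^2 < n := by
          have := A16 (a2 := a2) (a3 := a3) hq hb0u hb1u hF
          linarith
        rw [show b0 + b1*q + a2*q^2 + a3*q^3 = (b0+b1*q) + (a2+a3*q)*q^2 from by ring,
            rot2' q n (b0+b1*q) (a2+a3*q) hq4 hrotpre]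
        have hble : a2 + a3*q ≤ b0 + b1*q := by
          have := A14 (a2 := a2) (a3 := a3) hq hb1l hb02
          linarith
        obtain ⟨k, hk⟩ := Nat.exists_eq_add_of_le hble
        rw [hk]
        exact A17 (a2 := a2) (a3 := a3) (k := k) hq
      · have hpos3 : 0 < b1 + a2*q + a3*q^2 + b0*q^3 := by
          have h3 : 1*q^3 ≤ b0*q^3 := mul_le_mul_left (by omega) _
          linarith [Nat.zero_le (b1 + a2*q + a3*q^2), Nat.one_le_pow 3 q hq0]
        have hr3 := recip3' q n b0 b1 a2 a3 hq hq4 hb0u hb1u hF hpos3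
        refine lt_of_le_of_lt (min_le_right _ _) ?_
        rw [hr3]
        apply nsub_lt'
        · exact A18 hq hq4 hba
        · exact A19 (show 0 < b0 by omega)
  rw [key, Finset.card_image_of_injOn, Finset.card_product, Nat.card_Ico, Nat.card_Ico]
  · have h5 : q - (q - a3) = a3 := by omega
    rw [h5]
  · intro p hp p' hp' hpp
    simp only [Finset.mem_coe, Finset.mem_product, Finset.mem_Ico] at hp hp'
    have h1 : p.1 + p.2 * q = p'.1 + p'.2 * q := by
      simp only at hpp
      linarith [hpp]
    have hp1 : p.1 = p'.1 := by
      have e1 : (p.1 + p.2 * q) % q = p.1 := by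
        rw [Nat.add_mul_mod_self_right, Nat.mod_eq_of_lt hp.1.2]
      have e2 : (p'.1 + p'.2 * q) % q = p'.1 := by
        rw [Nat.add_mul_mod_self_right, Nat.mod_eq_of_lt hp'.1.2]
      rw [← e1, ← e2, h1]
    have hp2 : p.2 = p'.2 := by
      have e1 : (p.1 + p.2 * q) / q = p.2 := by
        rw [Nat.add_mul_div_right _ _ hq0, Nat.div_eq_of_lt hp.1.2]; omega
      have e2 : (p'.1 + p'.2 * q) / q = p'.2 := by
        rw [Nat.add_mul_div_right _ _ hq0, Nat.div_eq_of_lt hp'.1.2]; omega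
      rw [← e1, ← e2, h1]
    exact Prod.ext hp1 hp2
end

section
/- Let q ≥ 2 and n = q^2 - 1, and let 0 ≤ b_1 ≤ q-1. The number of pairs (a_0, a_1) with 0 ≤ a_0, a_1 ≤ q-1, a_1 ≤ b_1 - 1, and a_0 + a_1 ≥ q - 1 equals b_1(b_1+1)/2, and among these the number with a_0 < a_1 equals (b_1 - q/2)^2 if q is even and b_1 > q/2, equals (b_1 - (q+1)/2)(b_1 - (q+1)/2 + 1) if q is odd and b_1 > (q+1)/2, and equals 0 if b_1 ≤ ⌈q/2⌉. -/
open Finset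

private lemma sumg2 (n : ℕ) : 2 * ∑ i ∈ range n, (i + 1) = n * (n + 1) := by
  induction n with
  | zero => simp
  | succ k ih => rw [sum_range_succ, Nat.mul_add, ih]; ring

private lemma sumodd (n : ℕ) : ∑ j ∈ range n, (2 * j + 1) = n ^ 2 := by
  induction n with
  | zero => simp
  | succ k ih => rw [sum_range_succ, ih]; ring

private lemma cardprod (q b1 : ℕ) (hb : b1 ≤ q) (f : ℕ → ℕ → Prop)
    [∀ a b, Decidable (f a b)] :
    ((range q ×ˢ range q).filter (fun p => p.2 < b1 ∧ f p.1 p.2)).card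
      = ∑ a1 ∈ range b1, ((range q).filter (fun a0 => f a0 a1)).card := by
  rw [card_filter, Finset.sum_product, Finset.sum_comm]
  have h1 : ∀ y ∈ range q, (∑ x ∈ range q, if y < b1 ∧ f x y then 1 else 0)
      = if y < b1 then ((range q).filter (fun a0 => f a0 y)).card else 0 := by
    intro y _
    by_cases hy : y < b1
    · simp only [hy, true_and, if_true, card_filter]
    · simp [hy]
  rw [Finset.sum_congr rfl h1, ← Finset.sum_filter]
  congr 1
  ext x
  simp only [mem_filter, mem_range]
  omega

private lemma row1 (q a1 : ℕ) (h : a1 < q) :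
    ((range q).filter (fun a0 => q - 1 ≤ a0 + a1)).card = a1 + 1 := by
  have he : (range q).filter (fun a0 => q - 1 ≤ a0 + a1) = Ico (q - 1 - a1) q := by
    ext x; simp only [mem_filter, mem_range, mem_Ico]; omega
  rw [he, Nat.card_Ico]; omega

private lemma row2 (q a1 : ℕ) (h : a1 < q) :
    ((range q).filter (fun a0 => q - 1 ≤ a0 + a1 ∧ a0 < a1)).card
      = a1 - (q - 1 - a1) := by
  have he : (range q).filter (fun a0 => q - 1 ≤ a0 + a1 ∧ a0 < a1)
      = Ico (q - 1 - a1) a1 := by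
    ext x; simp only [mem_filter, mem_range, mem_Ico]; omega
  rw [he, Nat.card_Ico]

/-- Combinatorial counts of digit pairs `(a0, a1)` with `a1 < b1` and
`a0 + a1 ≥ q - 1`, and of those additionally satisfying `a0 < a1`. -/
theorem stmt15 (q b1 : ℕ) (hq : 2 ≤ q) (hb : b1 ≤ q - 1) :
    ((Finset.range q ×ˢ Finset.range q).filter
        (fun p => p.2 < b1 ∧ q - 1 ≤ p.1 + p.2)).card = b1 * (b1 + 1) / 2 ∧
    (Even q → q / 2 < b1 →
      ((Finset.range q ×ˢ Finset.range q).filter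
          (fun p => p.2 < b1 ∧ q - 1 ≤ p.1 + p.2 ∧ p.1 < p.2)).card
        = (b1 - q / 2) ^ 2) ∧
    (Odd q → (q + 1) / 2 < b1 →
      ((Finset.range q ×ˢ Finset.range q).filter
          (fun p => p.2 < b1 ∧ q - 1 ≤ p.1 + p.2 ∧ p.1 < p.2)).card
        = (b1 - (q + 1) / 2) * (b1 - (q + 1) / 2 + 1)) ∧
    (b1 ≤ (q + 1) / 2 →
      ((Finset.range q ×ˢ Finset.range q).filter
          (fun p => p.2 < b1 ∧ q - 1 ≤ p.1 + p.2 ∧ p.1 < p.2)).card = 0) := by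
  have hbq : b1 ≤ q := by omega
  -- first count
  have hc1 : ((Finset.range q ×ˢ Finset.range q).filter
        (fun p => p.2 < b1 ∧ q - 1 ≤ p.1 + p.2)).card = b1 * (b1 + 1) / 2 := by
    rw [cardprod q b1 hbq (fun a0 a1 => q - 1 ≤ a0 + a1)]
    rw [Finset.sum_congr rfl (fun a1 ha1 => row1 q a1 (by
      simp only [mem_range] at ha1; omega))]
    have := sumg2 b1
    omega
  -- second count general form
  have hc2 : ((Finset.range q ×ˢ Finset.range q).filter
        (fun p => p.2 < b1 ∧ q - 1 ≤ p.1 + p.2 ∧ p.1 < p.2)).card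
      = ∑ a1 ∈ range b1, (a1 - (q - 1 - a1)) := by
    rw [cardprod q b1 hbq (fun a0 a1 => q - 1 ≤ a0 + a1 ∧ a0 < a1)]
    exact Finset.sum_congr rfl (fun a1 ha1 => row2 q a1 (by
      simp only [mem_range] at ha1; omega))
  refine ⟨hc1, ?_, ?_, ?_⟩
  · -- even case
    intro heq hlt
    obtain ⟨m, hm⟩ := heq
    have hm2 : q / 2 = m := by omega
    rw [hc2, hm2, ← Finset.sum_range_add_sum_Ico _ (show m ≤ b1 by omega)]
    have hz : ∑ a1 ∈ range m, (a1 - (q - 1 - a1)) = 0 := by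
      apply Finset.sum_eq_zero
      intro x hx; simp only [mem_range] at hx; omega
    rw [hz, zero_add, Finset.sum_Ico_eq_sum_range]
    rw [Finset.sum_congr rfl (fun j hj => (by
      simp only [mem_range] at hj; omega :
      m + j - (q - 1 - (m + j)) = 2 * j + 1))]
    rw [sumodd]
  · -- odd case
    intro hodd hlt
    obtain ⟨k, hk⟩ := hodd
    have ht : (q + 1) / 2 = k + 1 := by omega
    rw [hc2, ht, ← Finset.sum_range_add_sum_Ico _ (show k + 1 ≤ b1 by omega)]
    have hz : ∑ a1 ∈ range (k + 1), (a1 - (q - 1 - a1)) = 0 := by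
      apply Finset.sum_eq_zero
      intro x hx; simp only [mem_range] at hx; omega
    rw [hz, zero_add, Finset.sum_Ico_eq_sum_range]
    rw [Finset.sum_congr rfl (fun j hj => (by
      simp only [mem_range] at hj; omega :
      k + 1 + j - (q - 1 - (k + 1 + j)) = 2 * (j + 1)))]
    rw [← Finset.mul_sum]
    have := sumg2 (b1 - (k + 1))
    omega
  · -- small case
    intro hle
    rw [hc2]
    apply Finset.sum_eq_zero
    intro x hx; simp only [mem_range] at hx; omega
end

section
/- Let q ≥ 2 and t = b_0 + b_1·q with 0 ≤ b_0, b_1 ≤ q-1, and suppose b_0 + b_1 < q - 1. Then the number of a ∈ {0,...,t} with q-adic expansion a = a_0 + a_1·q satisfying a_0 + a_1 = q - 1 equals b_1, and the number satisfying a_0 + a_1 > q - 1 equals b_1(b_1 - 1)/2. Consequently c := 1 + (number with a_0 + a_1 = q-1) + 2·(number with a_0 + a_1 > q-1) = 1 + b_1^2, where the extra 1 accounts for a = 0. -/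
/-- Counting contributions to the entanglement parameter `c` of the Hermitian
Reed–Solomon EAQECC for `Δ = {0,…,t}`, `t = b0 + b1·q` with `b0 + b1 < q - 1`. -/
theorem stmt18 (q t b0 b1 : ℕ) (hq : 2 ≤ q) (hb0 : b0 ≤ q - 1) (hb1 : b1 ≤ q - 1)
    (ht : t = b0 + b1 * q) (hsum : b0 + b1 < q - 1) :
    ((Finset.Icc 0 t).filter (fun a => a % q + a / q = q - 1)).card = b1 ∧
    ((Finset.Icc 0 t).filter (fun a => a % q + a / q > q - 1)).card = b1 * (b1 - 1) / 2 ∧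
    1 + ((Finset.Icc 0 t).filter (fun a => a % q + a / q = q - 1)).card
      + 2 * ((Finset.Icc 0 t).filter (fun a => a % q + a / q > q - 1)).card
      = 1 + b1 ^ 2 := by
  have hq0 : 0 < q := by omega
  have hdivle : ∀ a, a ≤ t → a / q ≤ b1 := by
    intro a ha
    have h1 : a < (b1 + 1) * q := by
      have hb0q : b0 < q := by omega
      calc a ≤ b0 + b1 * q := by omega
        _ < (b1 + 1) * q := by nlinarith
    have := (Nat.div_lt_iff_lt_mul hq0).2 h1
    omega
  have hle : ∀ i a0, i < b1 → a0 < q → a0 + i * q ≤ t := by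
    intro i a0 hi ha0
    have h1 : a0 + i * q < (i + 1) * q := by nlinarith
    have h2 : (i + 1) * q ≤ b1 * q := Nat.mul_le_mul_right q (by omega)
    omega
  have hmod : ∀ i a0, a0 < q → (a0 + i * q) % q = a0 := by
    intro i a0 ha0
    rw [Nat.add_mul_mod_self_right, Nat.mod_eq_of_lt ha0]
  have hdiv : ∀ i a0, a0 < q → (a0 + i * q) / q = i := by
    intro i a0 ha0
    rw [Nat.add_mul_div_right _ _ hq0, Nat.div_eq_of_lt ha0]
    omega
  -- first set
  have h1 : ((Finset.Icc 0 t).filter (fun a => a % q + a / q = q - 1))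
      = (Finset.range b1).image (fun i => (q - 1 - i) + i * q) := by
    ext a
    simp only [Finset.mem_filter, Finset.mem_Icc, Finset.mem_image, Finset.mem_range,
      Nat.zero_le, true_and]
    constructor
    · rintro ⟨ha, hcond⟩
      have hmd : a % q + a / q * q = a := Nat.mod_add_div' a q
      have hd := hdivle a ha
      refine ⟨a / q, ?_, ?_⟩
      · by_contra hcon
        have hdq : a / q = b1 := by omega
        rw [hdq] at hmd hcond
        omega
      · have hm : a % q = q - 1 - a / q := by omega
        rw [← hm]; exact hmd
    · rintro ⟨i, hi, rfl⟩
      have hilt : i < q - 1 := by omega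
      have ha0 : q - 1 - i < q := by omega
      refine ⟨hle i _ hi ha0, ?_⟩
      rw [hmod i _ ha0, hdiv i _ ha0]
      omega
  have hc1 : ((Finset.Icc 0 t).filter (fun a => a % q + a / q = q - 1)).card = b1 := by
    rw [h1, Finset.card_image_of_injOn, Finset.card_range]
    intro i hi j hj hij
    simp only [Finset.mem_coe, Finset.mem_range] at hi hj
    have hi' : q - 1 - i < q := by omega
    have hj' : q - 1 - j < q := by omega
    have d1 := hdiv i (q - 1 - i) hi'
    have d2 := hdiv j (q - 1 - j) hj'
    simp only at hij
    rw [hij] at d1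
    omega
  -- second set
  have h2 : ((Finset.Icc 0 t).filter (fun a => a % q + a / q > q - 1))
      = ((Finset.range b1).sigma (fun i => Finset.Ico (q - i) q)).image
          (fun p => p.2 + p.1 * q) := by
    ext a
    simp only [Finset.mem_filter, Finset.mem_Icc, Finset.mem_image, Finset.mem_sigma,
      Finset.mem_range, Finset.mem_Ico, Nat.zero_le, true_and]
    constructor
    · rintro ⟨ha, hcond⟩
      have hmd : a % q + a / q * q = a := Nat.mod_add_div' a q
      have hd := hdivle a ha
      have hm : a % q < q := Nat.mod_lt a hq0
      have hib1 : a / q < b1 := by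
        by_contra hcon
        have hdq : a / q = b1 := by omega
        rw [hdq] at hmd hcond
        omega
      refine ⟨⟨a / q, a % q⟩, ⟨hib1, ?_, ?_⟩, hmd⟩ <;> dsimp only <;> omega
    · rintro ⟨⟨i, a0⟩, ⟨hi, hge, hlt⟩, rfl⟩
      dsimp only at hge hlt
      refine ⟨hle i a0 hi hlt, ?_⟩
      rw [hmod i a0 hlt, hdiv i a0 hlt]
      omega
  have hc2 : ((Finset.Icc 0 t).filter (fun a => a % q + a / q > q - 1)).card
      = b1 * (b1 - 1) / 2 := by
    rw [h2, Finset.card_image_of_injOn]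
    · rw [Finset.card_sigma]
      have hcard : ∀ i ∈ Finset.range b1, (Finset.Ico (q - i) q).card = i := by
        intro i hi
        simp only [Finset.mem_range] at hi
        rw [Nat.card_Ico]
        omega
      rw [Finset.sum_congr rfl hcard, Finset.sum_range_id]
    · rintro ⟨i, a0⟩ hp ⟨j, c0⟩ hp' hij
      simp only [Finset.mem_coe, Finset.mem_sigma, Finset.mem_range, Finset.mem_Ico] at hp hp'
      simp only at hij
      have d1 := hdiv i a0 hp.2.2
      have d2 := hdiv j c0 hp'.2.2
      rw [hij] at d1
      have hii : i = j := by omega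
      subst hii
      have : a0 = c0 := by omega
      simp [this]
  refine ⟨hc1, hc2, ?_⟩
  rw [hc1, hc2]
  rcases Nat.eq_zero_or_pos b1 with h | h
  · simp [h]
  · obtain ⟨m, rfl⟩ : ∃ m, b1 = m + 1 := ⟨b1 - 1, by omega⟩
    have hs : m + 1 - 1 = m := rfl
    rw [hs]
    have heven : 2 ∣ (m + 1) * m := by
      rcases Nat.even_or_odd m with he | ho
      · exact Dvd.dvd.mul_left he.two_dvd _
      · exact Dvd.dvd.mul_right (ho.add_one).two_dvd _
    rw [Nat.mul_div_cancel' heven]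
    ring
end

section
/- Let q ≥ 2 and t = b_0 + b_1·q with 0 ≤ b_0, b_1 ≤ q-1, and suppose b_0 + b_1 ≥ q - 1. Then the quantity c := 1 + #{a ∈ {1,...,t} : a_0 + a_1 = q - 1} + 2·#{a ∈ {1,...,t} : a_0 + a_1 > q - 1}, where a = a_0 + a_1·q is the q-adic expansion, equals b_1^2 + 2(b_0 + b_1 - q) + 4. -/
private lemma gauss19 (n : ℕ) : (∑ i ∈ Finset.range n, i) * 2 + n = n * n := by
  induction n with
  | zero => simp
  | succ n ih =>
    rw [Finset.sum_range_succ]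
    have h : (n+1)*(n+1) = n*n + n + n + 1 := by ring
    omega

/-- The entanglement parameter `c` of the Hermitian Reed–Solomon EAQECC for
`Δ = {0,…,t}`, `t = b0 + b1·q` with `b0 + b1 ≥ q - 1`, equals
`b1^2 + 2(b0 + b1 - q) + 4`. -/
theorem stmt19 (q t b0 b1 : ℕ) (hq : 2 ≤ q) (hb0 : b0 ≤ q - 1) (hb1 : b1 ≤ q - 1)
    (ht : t = b0 + b1 * q) (hsum : q - 1 ≤ b0 + b1) :
    (1 + ((Finset.Icc 1 t).filter (fun a => a % q + a / q = q - 1)).card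
      + 2 * ((Finset.Icc 1 t).filter (fun a => a % q + a / q > q - 1)).card : ℤ)
      = (b1 : ℤ) ^ 2 + 2 * ((b0 : ℤ) + b1 - q) + 4 := by
  have hq0 : 0 < q := by omega
  have hb0q : b0 < q := by omega
  have hb1q : b1 < q := by omega
  have hb1q' : b1 + 1 ≤ q := hb1q
  have htq : t / q = b1 := by
    rw [ht, Nat.add_mul_div_right _ _ hq0, Nat.div_eq_of_lt hb0q, zero_add]
  have hfib : ∀ a : ℕ, a ≤ t → a / q ∈ Finset.range q := by
    intro a ha
    rw [Finset.mem_range]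
    have := Nat.div_le_div_right (c := q) ha
    omega
  -- equality count
  have hEq : ((Finset.Icc 1 t).filter (fun a => a % q + a / q = q - 1)).card = b1 + 1 := by
    rw [Finset.card_eq_sum_card_fiberwise (f := fun a => a / q) (t := Finset.range q)
      (fun a ha => hfib a (Finset.mem_Icc.mp (Finset.mem_filter.mp ha).1).2)]
    have hterm : ∀ a1 ∈ Finset.range q,
        (((Finset.Icc 1 t).filter (fun a => a % q + a / q = q - 1)).filter
          (fun a => a / q = a1)).card = if a1 ≤ b1 then 1 else 0 := by
      intro a1 ha1
      rw [Finset.mem_range] at ha1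
      by_cases h : a1 ≤ b1
      · rw [if_pos h, Finset.filter_filter]
        have hset : (Finset.Icc 1 t).filter (fun a => (a % q + a / q = q - 1) ∧ a / q = a1)
            = {q - 1 - a1 + a1 * q} := by
          ext a
          simp only [Finset.mem_filter, Finset.mem_Icc, Finset.mem_singleton]
          have hc : q * a1 = a1 * q := Nat.mul_comm q a1
          constructor
          · rintro ⟨⟨h1, h2⟩, h3, h4⟩
            have hm := Nat.mod_add_div a q
            rw [h4] at hm h3
            omega
          · intro hx
            subst hx
            have hdiv : (q - 1 - a1 + a1 * q) / q = a1 := by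
              rw [Nat.add_mul_div_right _ _ hq0, Nat.div_eq_of_lt (by omega), zero_add]
            have hmod : (q - 1 - a1 + a1 * q) % q = q - 1 - a1 := by
              rw [Nat.add_mul_mod_self_right, Nat.mod_eq_of_lt (by omega)]
            refine ⟨⟨?_, ?_⟩, ?_, hdiv⟩
            · have := Nat.le_mul_of_pos_right a1 hq0
              omega
            · rcases Nat.lt_or_ge a1 b1 with hlt | hge
              · have hmul := Nat.mul_le_mul_right q (show a1 + 1 ≤ b1 from hlt)
                rw [Nat.succ_mul] at hmul
                omega
              · have : a1 = b1 := le_antisymm h hge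
                subst this
                omega
            · rw [hmod, hdiv]
              omega
        rw [hset, Finset.card_singleton]
      · rw [if_neg h, Finset.card_eq_zero, Finset.filter_eq_empty_iff]
        intro a ha
        rw [Finset.mem_filter, Finset.mem_Icc] at ha
        have := Nat.div_le_div_right (c := q) ha.1.2
        omega
    rw [Finset.sum_congr rfl hterm, Finset.range_eq_Ico,
      ← Finset.sum_Ico_consecutive _ (Nat.zero_le (b1+1)) hb1q']
    have h1 : ∑ a1 ∈ Finset.Ico 0 (b1+1), (if a1 ≤ b1 then 1 else 0) = b1 + 1 := by
      rw [Finset.sum_congr rfl (fun x hx => if_pos (by rw [Finset.mem_Ico] at hx; omega))]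
      simp
    have h2 : ∑ a1 ∈ Finset.Ico (b1+1) q, (if a1 ≤ b1 then 1 else 0) = 0 := by
      rw [Finset.sum_congr rfl (fun x hx => if_neg (by rw [Finset.mem_Ico] at hx; omega))]
      simp
    omega
  -- greater count
  have hGt : 2 * ((Finset.Icc 1 t).filter (fun a => a % q + a / q > q - 1)).card + b1 + 2 * q
      = b1 * b1 + 2 * (b0 + b1 + 1) := by
    have hcard : ((Finset.Icc 1 t).filter (fun a => a % q + a / q > q - 1)).card
        = (∑ i ∈ Finset.range b1, i) + (b0 + b1 + 1 - q) := by
      rw [Finset.card_eq_sum_card_fiberwise (f := fun a => a / q) (t := Finset.range q)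
        (fun a ha => hfib a (Finset.mem_Icc.mp (Finset.mem_filter.mp ha).1).2)]
      have hterm : ∀ a1 ∈ Finset.range q,
          (((Finset.Icc 1 t).filter (fun a => a % q + a / q > q - 1)).filter
            (fun a => a / q = a1)).card
          = if a1 < b1 then a1 else if a1 = b1 then b0 + b1 + 1 - q else 0 := by
        intro a1 ha1
        rw [Finset.mem_range] at ha1
        have hc : q * a1 = a1 * q := Nat.mul_comm q a1
        rcases Nat.lt_trichotomy a1 b1 with hlt | heq | hgt
        · rw [if_pos hlt, Finset.filter_filter]
          have hs : (a1 + 1) * q = a1 * q + q := Nat.succ_mul a1 q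
          have hmul := Nat.mul_le_mul_right q (show a1 + 1 ≤ b1 from hlt)
          rw [Nat.succ_mul] at hmul
          have hset : (Finset.Icc 1 t).filter (fun a => (a % q + a / q > q - 1) ∧ a / q = a1)
              = Finset.Icc (q - a1 + a1 * q) (q - 1 + a1 * q) := by
            ext a
            simp only [Finset.mem_filter, Finset.mem_Icc]
            constructor
            · rintro ⟨⟨h1, h2⟩, h3, h4⟩
              have hm := Nat.mod_add_div a q
              have hml := Nat.mod_lt a hq0
              rw [h4] at hm h3
              omega
            · rintro ⟨hlo, hhi⟩
              have hdiv : a / q = a1 :=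
                Nat.div_eq_of_lt_le (by omega) (by omega)
              have hm := Nat.mod_add_div a q
              rw [hdiv] at hm
              refine ⟨⟨by omega, by omega⟩, by omega, hdiv⟩
          rw [hset, Nat.card_Icc]
          omega
        · subst heq
          rw [if_neg (lt_irrefl a1), if_pos rfl, Finset.filter_filter]
          have hs : (a1 + 1) * q = a1 * q + q := Nat.succ_mul a1 q
          have hset : (Finset.Icc 1 t).filter (fun a => (a % q + a / q > q - 1) ∧ a / q = a1)
              = Finset.Icc (q - a1 + a1 * q) t := by
            ext a
            simp only [Finset.mem_filter, Finset.mem_Icc]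
            constructor
            · rintro ⟨⟨h1, h2⟩, h3, h4⟩
              have hm := Nat.mod_add_div a q
              have hml := Nat.mod_lt a hq0
              rw [h4] at hm h3
              omega
            · rintro ⟨hlo, hhi⟩
              have hdiv : a / q = a1 :=
                Nat.div_eq_of_lt_le (by omega) (by omega)
              have hm := Nat.mod_add_div a q
              rw [hdiv] at hm
              refine ⟨⟨by omega, hhi⟩, by omega, hdiv⟩
          rw [hset, Nat.card_Icc]
          omega
        · rw [if_neg (by omega), if_neg (by omega), Finset.card_eq_zero,
            Finset.filter_eq_empty_iff]
          intro a ha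
          rw [Finset.mem_filter, Finset.mem_Icc] at ha
          have := Nat.div_le_div_right (c := q) ha.1.2
          omega
      rw [Finset.sum_congr rfl hterm, Finset.range_eq_Ico,
        ← Finset.sum_Ico_consecutive _ (Nat.zero_le (b1+1)) hb1q']
      have h2 : ∑ a1 ∈ Finset.Ico (b1+1) q,
          (if a1 < b1 then a1 else if a1 = b1 then b0 + b1 + 1 - q else 0) = 0 := by
        refine Finset.sum_eq_zero fun x hx => ?_
        rw [Finset.mem_Ico] at hx
        rw [if_neg (by omega), if_neg (by omega)]
      rw [h2, add_zero, ← Finset.range_eq_Ico, Finset.sum_range_succ,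
        if_neg (lt_irrefl b1), if_pos rfl]
      congr 1
      exact Finset.sum_congr rfl fun x hx => if_pos (Finset.mem_range.mp hx)
    rw [hcard]
    have := gauss19 b1
    omega
  rw [hEq]
  have hc : 2 * ((((Finset.Icc 1 t).filter (fun a => a % q + a / q > q - 1)).card : ℤ))
      + b1 + 2 * q = (b1 : ℤ) * b1 + 2 * ((b0 : ℤ) + b1 + 1) := by
    exact_mod_cast congrArg (Nat.cast : ℕ → ℤ) hGt
  push_cast
  linear_combination hc
end
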